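/- arXiv:math/0605046 — 12 statements merged into one kernel-verified Lean document; each statement's English description precedes it below -/
import Mathlib

section
/- Let $R$ be a commutative Noetherian ring with identity, and let $P_1,\dots,P_r$ be finite subsets of $R$ with union $P$. Suppose (i) $P_1$ has exactly one element, and (ii) for each $i$ with $1<i\le r$, any two distinct elements $p,p'\in P_i$ satisfy $(pp')^m\in(\bigcup_{j=1}^{i-1}P_j)$ for some positive integer $m$ (where $(S)$ denotes the ideal generated by $S$). For each $i$ set $q_i=\sum_{p\in P_i}p^{e(p)}$, where the $e(p)\ge 1$ are arbitrary positive integers. Then $\sqrt{(P)}=\sqrt{(q_1,\dots,q_r)}$. -/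
/-- **Lemma 1** (Barile). Let `R` be a commutative Noetherian ring, `P 0, …, P (r-1)` finite
subsets of `R` with union `P`. If `P 0` has exactly one element, and for `i > 0` any two
distinct elements `p, p'` of `P i` satisfy `(p * p') ^ m ∈ (⋃_{j < i} P j)` for some `m ≥ 1`,
then, setting `q i = ∑_{p ∈ P i} p ^ e p` for arbitrary exponents `e p ≥ 1`, we have
`√(P) = √(q 0, …, q (r-1))`. -/
theorem stmt_0 {R : Type*} [CommRing R] [IsNoetherianRing R]
    (r : ℕ) (hr : 0 < r) (P : Fin r → Finset R)
    (h1 : (P ⟨0, hr⟩).card = 1)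
    (h2 : ∀ i : Fin r, (⟨0, hr⟩ : Fin r) < i → ∀ p ∈ P i, ∀ p' ∈ P i, p ≠ p' →
      ∃ m : ℕ, 0 < m ∧ (p * p') ^ m ∈
        Ideal.span (⋃ j : Fin r, ⋃ _ : j < i, (P j : Set R)))
    (e : R → ℕ) (he : ∀ p, 1 ≤ e p)
    (q : Fin r → R) (hq : ∀ i, q i = ∑ p ∈ P i, p ^ e p) :
    (Ideal.span (⋃ i : Fin r, (P i : Set R))).radical =
      (Ideal.span (Set.range q)).radical := by
  classical
  set I := Ideal.span (⋃ i : Fin r, (P i : Set R)) with hI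
  set J := (Ideal.span (Set.range q)).radical with hJ
  have hJrad : ∀ (x : R) (n : ℕ), x ^ n ∈ J → x ∈ J := by
    intro x n hx
    have : x ∈ (Ideal.span (Set.range q)).radical.radical :=
      Ideal.mem_radical_of_pow_mem (m := n) (Ideal.le_radical hx)
    rwa [Ideal.radical_idem] at this
  have key : ∀ n : ℕ, ∀ hn : n < r, ∀ p ∈ P ⟨n, hn⟩, p ∈ J := by
    intro n
    induction n using Nat.strong_induction_on with
    | _ n ih =>
      intro hn p hp
      have cross : ∀ p' ∈ P ⟨n, hn⟩, p' ≠ p → p * p' ∈ J := by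
        intro p' hp' hne
        rcases Nat.eq_zero_or_pos n with h0 | h0
        · subst h0
          exact absurd (Finset.card_le_one.mp (le_of_eq h1) p' hp' p hp) hne
        · obtain ⟨m, hm, hmem⟩ := h2 ⟨n, hn⟩ (Fin.mk_lt_mk.mpr h0) p hp p' hp' (Ne.symm hne)
          have hsub : Ideal.span (⋃ j : Fin r, ⋃ _ : j < (⟨n, hn⟩ : Fin r),
              (P j : Set R)) ≤ J := by
            rw [Ideal.span_le]
            intro x hx
            simp only [Set.mem_iUnion] at hx
            obtain ⟨j, hj, hxj⟩ := hx
            exact ih j.val hj j.isLt x hxj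
          exact hJrad _ m (hsub hmem)
      have hpq : p * q ⟨n, hn⟩ ∈ J :=
        Ideal.le_radical (Ideal.mul_mem_left _ p (Ideal.subset_span ⟨_, rfl⟩))
      rw [hq, ← Finset.add_sum_erase _ _ hp, mul_add, Finset.mul_sum] at hpq
      have hsum : ∑ p' ∈ (P ⟨n, hn⟩).erase p, p * p' ^ e p' ∈ J := by
        apply Ideal.sum_mem
        intro p' hp'
        have hne : p' ≠ p := (Finset.mem_erase.mp hp').1
        have hp'' : p' ∈ P ⟨n, hn⟩ := (Finset.mem_erase.mp hp').2
        have heq : p * p' ^ e p' = (p * p') * p' ^ (e p' - 1) := by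
          have h3 : e p' - 1 + 1 = e p' := Nat.succ_pred_eq_of_pos (he p')
          conv_lhs => rw [← h3]
          ring
        rw [heq]
        exact Ideal.mul_mem_right _ _ (cross p' hp'' hne)
      have hpow : p * p ^ e p ∈ J := by
        have := Ideal.sub_mem _ hpq hsum
        simpa using this
      exact hJrad p (e p + 1) (by rw [pow_succ']; exact hpow)
  apply le_antisymm
  · have hIJ : I ≤ J := by
      rw [hI, Ideal.span_le]
      intro x hx
      obtain ⟨i, hxi⟩ := Set.mem_iUnion.mp hx
      exact key i.val i.isLt x hxi
    calc I.radical ≤ J.radical := Ideal.radical_mono hIJ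
      _ = J := Ideal.radical_idem _
  · apply Ideal.radical_mono
    rw [Ideal.span_le]
    rintro x ⟨i, rfl⟩
    rw [hq]
    apply Ideal.sum_mem
    intro p hp
    have hpI : p ∈ I := Ideal.subset_span (Set.mem_iUnion.mpr ⟨i, hp⟩)
    exact Ideal.pow_mem_of_mem _ hpI _ (he p)
end

section
/- Let $R$ be a commutative Noetherian ring with identity and let $I$ and $J$ be ideals of $R$ generated by $u$ elements and $v$ elements, respectively. Then $I\cap J$ is generated up to radical by $u+v-1$ elements, i.e., there exist $\gamma_1,\dots,\gamma_{u+v-1}\in R$ with $\sqrt{I\cap J}=\sqrt{(\gamma_1,\dots,\gamma_{u+v-1})}$. -/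
open Finset

/-- Gauss-lemma style key fact: if a prime contains all antidiagonal sums
`∑_{i+j=k} μ i * ν j`, then it contains every product `μ i * ν j`. -/
lemma key_prime_products {R : Type*} [CommRing R] {u v : ℕ} (μ : Fin u → R) (ν : Fin v → R)
    (P : Ideal R) (hP : P.IsPrime)
    (h : ∀ k : Fin (u + v - 1),
      (∑ p ∈ Finset.univ.filter
          (fun p : Fin u × Fin v => (p.1 : ℕ) + (p.2 : ℕ) = (k : ℕ)), μ p.1 * ν p.2) ∈ P) :
    ∀ (i : Fin u) (j : Fin v), μ i * ν j ∈ P := by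
  classical
  intro i j
  by_contra hij
  have hμ : (Finset.univ.filter (fun i : Fin u => μ i ∉ P)).Nonempty :=
    ⟨i, Finset.mem_filter.mpr ⟨Finset.mem_univ _, fun h => hij (P.mul_mem_right _ h)⟩⟩
  have hν : (Finset.univ.filter (fun j : Fin v => ν j ∉ P)).Nonempty :=
    ⟨j, Finset.mem_filter.mpr ⟨Finset.mem_univ _, fun h => hij (P.mul_mem_left _ h)⟩⟩
  obtain ⟨i0, hi0mem, hi0min⟩ := Finset.exists_min_image _ (fun i : Fin u => (i : ℕ)) hμ
  obtain ⟨j0, hj0mem, hj0min⟩ := Finset.exists_min_image _ (fun j : Fin v => (j : ℕ)) hν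
  have hi0 : μ i0 ∉ P := (Finset.mem_filter.mp hi0mem).2
  have hj0 : ν j0 ∉ P := (Finset.mem_filter.mp hj0mem).2
  have hi0min' : ∀ i' : Fin u, (i' : ℕ) < (i0 : ℕ) → μ i' ∈ P := by
    intro i' hlt
    by_contra hc
    exact absurd (hi0min i' (by simp [hc])) (not_le.mpr hlt)
  have hj0min' : ∀ j' : Fin v, (j' : ℕ) < (j0 : ℕ) → ν j' ∈ P := by
    intro j' hlt
    by_contra hc
    exact absurd (hj0min j' (by simp [hc])) (not_le.mpr hlt)
  have hk : (i0 : ℕ) + (j0 : ℕ) < u + v - 1 := by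
    have := i0.isLt; have := j0.isLt; omega
  set K : Fin (u + v - 1) := ⟨(i0 : ℕ) + (j0 : ℕ), hk⟩
  have hmem : ((i0, j0) : Fin u × Fin v) ∈
      Finset.univ.filter (fun p : Fin u × Fin v => (p.1 : ℕ) + (p.2 : ℕ) = (K : ℕ)) := by
    simp [K]
  have hrest : (∑ p ∈ (Finset.univ.filter
      (fun p : Fin u × Fin v => (p.1 : ℕ) + (p.2 : ℕ) = (K : ℕ))).erase (i0, j0),
      μ p.1 * ν p.2) ∈ P := by
    refine Ideal.sum_mem _ ?_
    intro p hp
    rw [Finset.mem_erase, Finset.mem_filter] at hp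
    obtain ⟨hne, -, hsum⟩ := hp
    rcases lt_trichotomy (p.1 : ℕ) (i0 : ℕ) with hlt | heq | hgt
    · exact P.mul_mem_right _ (hi0min' p.1 hlt)
    · exfalso
      apply hne
      have h1 : p.1 = i0 := Fin.ext heq
      have h2 : p.2 = j0 := Fin.ext (by simp [K] at hsum; omega)
      rw [Prod.ext_iff]; exact ⟨h1, h2⟩
    · have : (p.2 : ℕ) < (j0 : ℕ) := by simp [K] at hsum; omega
      exact P.mul_mem_left _ (hj0min' p.2 this)
  have hprod : μ i0 * ν j0 ∈ P := by
    have := Finset.add_sum_erase _ (fun p : Fin u × Fin v => μ p.1 * ν p.2) hmem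
    have hsub : μ i0 * ν j0 = (∑ p ∈ Finset.univ.filter
        (fun p : Fin u × Fin v => (p.1 : ℕ) + (p.2 : ℕ) = (K : ℕ)), μ p.1 * ν p.2)
        - (∑ p ∈ (Finset.univ.filter
        (fun p : Fin u × Fin v => (p.1 : ℕ) + (p.2 : ℕ) = (K : ℕ))).erase (i0, j0),
        μ p.1 * ν p.2) := by
      rw [← this]; ring
    rw [hsub]
    exact Ideal.sub_mem _ (h K) hrest
  rcases hP.mem_or_mem hprod with h1 | h2
  · exact hi0 h1
  · exact hj0 h2

/-- If `I` and `J` are ideals of a commutative Noetherian ring generated by `u` and `v`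
elements respectively, then `I ∩ J` is generated up to radical by `u + v - 1` elements. -/
theorem stmt_1 {R : Type*} [CommRing R] [IsNoetherianRing R]
    (u v : ℕ) (μ : Fin u → R) (ν : Fin v → R)
    (I J : Ideal R) (hI : I = Ideal.span (Set.range μ)) (hJ : J = Ideal.span (Set.range ν)) :
    ∃ γ : Fin (u + v - 1) → R,
      (I ⊓ J).radical = (Ideal.span (Set.range γ)).radical := by
  classical
  refine ⟨fun k => ∑ p ∈ Finset.univ.filter
      (fun p : Fin u × Fin v => (p.1 : ℕ) + (p.2 : ℕ) = (k : ℕ)), μ p.1 * ν p.2, ?_⟩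
  set γ : Fin (u + v - 1) → R := fun k => ∑ p ∈ Finset.univ.filter
      (fun p : Fin u × Fin v => (p.1 : ℕ) + (p.2 : ℕ) = (k : ℕ)), μ p.1 * ν p.2 with hγ
  apply le_antisymm
  · -- (I ⊓ J).radical ≤ (span γ).radical
    have hprod : ∀ (i : Fin u) (j : Fin v), μ i * ν j ∈ (Ideal.span (Set.range γ)).radical := by
      intro i j
      rw [Ideal.radical_eq_sInf, Ideal.mem_sInf]
      rintro P ⟨hle, hPprime⟩
      exact key_prime_products μ ν P hPprime
        (fun k => hle (Ideal.subset_span ⟨k, rfl⟩)) i j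
    have hIJ : I * J ≤ (Ideal.span (Set.range γ)).radical := by
      rw [hI, hJ, Ideal.mul_le]
      intro a ha b hb
      have : a * b ∈ Ideal.span (Set.range μ) * Ideal.span (Set.range ν) :=
        Ideal.mul_mem_mul ha hb
      rw [Ideal.span_mul_span'] at this
      refine Ideal.span_le.mpr ?_ this
      rintro x ⟨y, ⟨i, rfl⟩, z, ⟨j, rfl⟩, rfl⟩
      exact hprod i j
    have hinf : I ⊓ J ≤ (Ideal.span (Set.range γ)).radical := by
      intro x hx
      have hx2 : x ^ 2 ∈ I * J := by
        rw [sq]; exact Ideal.mul_mem_mul hx.1 hx.2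
      exact Ideal.mem_radical_of_pow_mem (hIJ hx2)
    calc (I ⊓ J).radical ≤ (Ideal.span (Set.range γ)).radical.radical :=
            Ideal.radical_mono hinf
      _ = (Ideal.span (Set.range γ)).radical := Ideal.radical_idem _
  · -- (span γ).radical ≤ (I ⊓ J).radical
    apply Ideal.radical_mono
    rw [Ideal.span_le]
    rintro x ⟨k, rfl⟩
    refine Ideal.sum_mem _ (fun p hp => ?_)
    constructor
    · exact I.mul_mem_right _ (hI ▸ Ideal.subset_span ⟨p.1, rfl⟩)
    · exact J.mul_mem_left _ (hJ ▸ Ideal.subset_span ⟨p.2, rfl⟩)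
end

section
/- Let $R$ be a commutative Noetherian ring, $\mu_1,\dots,\mu_u,\nu_1,\dots,\nu_v\in R$, $I=(\mu_1,\dots,\mu_u)$, $J=(\nu_1,\dots,\nu_v)$. Suppose there is a positive integer $s$ with $s<u$, $s\le v$, such that $(\mu_1,\dots,\mu_i)\subseteq(\nu_1,\dots,\nu_i)$ for all $1\le i\le s$. With the convention $\mu_h=0$ for $h>u$, $\nu_k=0$ for $k>v$, define $\gamma_i=\sum_{h+k=i+s+1,\ h\ge s+1}\mu_h\nu_k$ for $1\le i\le u-s$ and for $u+1\le i\le u+v-s-1$, and $\gamma_i=\mu_{i-u+s}+\sum_{h+k=i+s+1,\ h\ge s+1}\mu_h\nu_k$ for $u-s+1\le i\le u$. Then if $s\le v-2$, $\sqrt{I\cap J}=\sqrt{(\gamma_1,\dots,\gamma_{u+v-s-1})}$, and if $v-1\le s\le v$, $\sqrt{I\cap J}=\sqrt{(\gamma_1,\dots,\gamma_u)}$. -/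
private lemma mul_span_mem {R : Type*} [CommRing R] {Q : Ideal R} {T : Set R} {a x : R}
    (hx : x ∈ Ideal.span T) (h : ∀ t ∈ T, a * t ∈ Q) : a * x ∈ Q := by
  induction hx using Submodule.span_induction with
  | mem t ht => exact h t ht
  | zero => simpa using Q.zero_mem
  | add y z _ _ hy hz => rw [mul_add]; exact Q.add_mem hy hz
  | smul r y _ hy => rw [smul_eq_mul, mul_left_comm]; exact Q.mul_mem_left r hy

private lemma barile_core {R : Type*} [CommRing R]
    (u v s N : ℕ) (μ ν : ℕ → R)
    (hs : 1 ≤ s) (hsu : s < u) (hsv : s ≤ v)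
    (hμ0 : ∀ h, u < h → μ h = 0) (hν0 : ∀ k, v < k → ν k = 0)
    (hsub : ∀ i, 1 ≤ i → i ≤ s →
      Ideal.span (μ '' Set.Icc 1 i) ≤ Ideal.span (ν '' Set.Icc 1 i))
    (γ : ℕ → R)
    (hγ1 : ∀ i, 1 ≤ i → (i ≤ u - s ∨ u + 1 ≤ i) →
      γ i = ∑ h ∈ Finset.Icc (s + 1) (s + i), μ h * ν (i + s + 1 - h))
    (hγ2 : ∀ i, u - s + 1 ≤ i → i ≤ u →
      γ i = μ (i + s - u) + ∑ h ∈ Finset.Icc (s + 1) (s + i), μ h * ν (i + s + 1 - h))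
    (hNu : u ≤ N) (hNv : u + v - s - 1 ≤ N) :
    (Ideal.span (μ '' Set.Icc 1 u) ⊓ Ideal.span (ν '' Set.Icc 1 v)).radical
      = (Ideal.span (γ '' Set.Icc 1 N)).radical := by
  set I := Ideal.span (μ '' Set.Icc 1 u) with hIdef
  set J := Ideal.span (ν '' Set.Icc 1 v) with hJdef
  set K := Ideal.span (γ '' Set.Icc 1 N) with hKdef
  -- decomposition of γ i
  have hdecomp : ∀ i, 1 ≤ i →
      (γ i = ∑ h ∈ Finset.Icc (s + 1) (s + i), μ h * ν (i + s + 1 - h)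
        ∧ ¬(u - s + 1 ≤ i ∧ i ≤ u)) ∨
      (γ i = μ (i + s - u) + ∑ h ∈ Finset.Icc (s + 1) (s + i), μ h * ν (i + s + 1 - h)
        ∧ (u - s + 1 ≤ i ∧ i ≤ u)) := by
    intro i hi
    by_cases hiu : u - s + 1 ≤ i ∧ i ≤ u
    · exact Or.inr ⟨hγ2 i hiu.1 hiu.2, hiu⟩
    · exact Or.inl ⟨hγ1 i hi (by omega), hiu⟩
  -- the key induction over diagonals
  have key : ∀ i, 1 ≤ i → i ≤ N →
      ((∀ h, s + 1 ≤ h → h ≤ s + i → μ h * ν (i + s + 1 - h) ∈ K.radical) ∧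
       (∀ j, 1 ≤ j → j ≤ s → i = u - s + j → μ j ∈ K.radical)) := by
    intro i
    induction i using Nat.strong_induction_on with
    | _ i IH =>
      intro hi1 hiN
      have lower : ∀ h l, s + 1 ≤ h → 1 ≤ l → h + l < i + s + 1 →
          μ h * ν l ∈ K.radical := by
        intro h l hh hl hlt
        have := (IH (h + l - s - 1) (by omega) (by omega) (by omega)).1 h hh (by omega)
        have e : (h + l - s - 1) + s + 1 - h = l := by omega
        rwa [e] at this
      have hγK : γ i ∈ K := Ideal.subset_span ⟨i, ⟨hi1, hiN⟩, rfl⟩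
      have hγQ : γ i ∈ K.radical := Ideal.le_radical hγK
      constructor
      · -- products on diagonal i
        intro h hh1 hh2
        by_cases hu : u < h
        · rw [hμ0 h hu, zero_mul]; exact Submodule.zero_mem _
        · push_neg at hu
          have hmemh : h ∈ Finset.Icc (s + 1) (s + i) := Finset.mem_Icc.mpr ⟨hh1, hh2⟩
          -- other terms on the same diagonal
          have hterm : ∀ h' ∈ (Finset.Icc (s + 1) (s + i)).erase h,
              (μ h * ν (i + s + 1 - h)) * (μ h' * ν (i + s + 1 - h')) ∈ K.radical := by
            intro h' hmem'
            have hne : h' ≠ h := Finset.ne_of_mem_erase hmem'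
            have hmem : h' ∈ Finset.Icc (s + 1) (s + i) := Finset.mem_of_mem_erase hmem'
            rw [Finset.mem_Icc] at hmem
            rcases lt_or_gt_of_ne hne with hlt | hgt
            · have hl : μ h' * ν (i + s + 1 - h) ∈ K.radical :=
                lower h' (i + s + 1 - h) hmem.1 (by omega) (by omega)
              have e : (μ h * ν (i + s + 1 - h)) * (μ h' * ν (i + s + 1 - h'))
                  = (μ h' * ν (i + s + 1 - h)) * (μ h * ν (i + s + 1 - h')) := by ring
              rw [e]; exact Ideal.mul_mem_right _ _ hl
            · have hl : μ h * ν (i + s + 1 - h') ∈ K.radical :=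
                lower h (i + s + 1 - h') hh1 (by omega) (by omega)
              have e : (μ h * ν (i + s + 1 - h)) * (μ h' * ν (i + s + 1 - h'))
                  = (μ h * ν (i + s + 1 - h')) * (μ h' * ν (i + s + 1 - h)) := by ring
              rw [e]; exact Ideal.mul_mem_right _ _ hl
          have hrest : ∑ h' ∈ (Finset.Icc (s + 1) (s + i)).erase h,
              (μ h * ν (i + s + 1 - h)) * (μ h' * ν (i + s + 1 - h')) ∈ K.radical :=
            Ideal.sum_mem _ hterm
          have hsq : (μ h * ν (i + s + 1 - h)) * (μ h * ν (i + s + 1 - h)) ∈ K.radical := by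
            rcases hdecomp i hi1 with ⟨he, _⟩ | ⟨he, hiu1, hiu2⟩
            · have hsum : (μ h * ν (i + s + 1 - h)) * γ i
                  = (μ h * ν (i + s + 1 - h)) * (μ h * ν (i + s + 1 - h))
                    + ∑ h' ∈ (Finset.Icc (s + 1) (s + i)).erase h,
                        (μ h * ν (i + s + 1 - h)) * (μ h' * ν (i + s + 1 - h')) := by
                rw [he, Finset.mul_sum, ← Finset.add_sum_erase _ _ hmemh]
              have hmul : (μ h * ν (i + s + 1 - h)) * γ i ∈ K.radical :=
                Ideal.mul_mem_left _ _ hγQ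
              have := Submodule.sub_mem _ hmul hrest
              rw [hsum] at this
              simpa using this
            · -- extra term μ (i+s-u)
              have hextra : (μ h * ν (i + s + 1 - h)) * μ (i + s - u) ∈ K.radical := by
                have hjmem : μ (i + s - u) ∈ Ideal.span (ν '' Set.Icc 1 (i + s - u)) :=
                  hsub (i + s - u) (by omega) (by omega)
                    (Ideal.subset_span ⟨i + s - u, ⟨by omega, le_refl _⟩, rfl⟩)
                refine mul_span_mem hjmem ?_
                rintro t ⟨l, ⟨hl1, hl2⟩, rfl⟩
                have hlow : μ h * ν l ∈ K.radical := lower h l hh1 hl1 (by omega)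
                have e : (μ h * ν (i + s + 1 - h)) * ν l
                    = (μ h * ν l) * ν (i + s + 1 - h) := by ring
                rw [e]; exact Ideal.mul_mem_right _ _ hlow
              have hsum : (μ h * ν (i + s + 1 - h)) * γ i
                  = (μ h * ν (i + s + 1 - h)) * μ (i + s - u)
                    + ((μ h * ν (i + s + 1 - h)) * (μ h * ν (i + s + 1 - h))
                    + ∑ h' ∈ (Finset.Icc (s + 1) (s + i)).erase h,
                        (μ h * ν (i + s + 1 - h)) * (μ h' * ν (i + s + 1 - h'))) := by
                rw [he, mul_add, Finset.mul_sum, ← Finset.add_sum_erase _ _ hmemh]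
              have hmul : (μ h * ν (i + s + 1 - h)) * γ i ∈ K.radical :=
                Ideal.mul_mem_left _ _ hγQ
              have h1 := Submodule.sub_mem _ hmul hextra
              have h2 := Submodule.sub_mem _ h1 hrest
              rw [hsum] at h2
              simpa using h2
          have : (μ h * ν (i + s + 1 - h)) ^ 2 ∈ K.radical := by rwa [pow_two]
          exact Ideal.mem_radical_of_pow_mem this
      · -- extra element μ j on diagonal i
        intro j hj1 hjs hij
        have hiu1 : u - s + 1 ≤ i := by omega
        have hiu2 : i ≤ u := by omega
        have hju : i + s - u = j := by omega
        rcases hdecomp i hi1 with ⟨_, hno⟩ | ⟨he, _⟩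
        · exact absurd ⟨hiu1, hiu2⟩ hno
        rw [hju] at he
        have hterm : ∀ h' ∈ Finset.Icc (s + 1) (s + i),
            μ j * (μ h' * ν (i + s + 1 - h')) ∈ K.radical := by
          intro h' hmem
          rw [Finset.mem_Icc] at hmem
          by_cases hu' : u < h'
          · rw [hμ0 h' hu', zero_mul, mul_zero]; exact Submodule.zero_mem _
          · push_neg at hu'
            have hjmem : μ j ∈ Ideal.span (ν '' Set.Icc 1 j) :=
              hsub j hj1 hjs (Ideal.subset_span ⟨j, ⟨hj1, le_refl _⟩, rfl⟩)
            rw [mul_comm]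
            refine mul_span_mem hjmem ?_
            rintro t ⟨l, ⟨hl1, hl2⟩, rfl⟩
            have hlow : μ h' * ν l ∈ K.radical := lower h' l hmem.1 hl1 (by omega)
            have e : (μ h' * ν (i + s + 1 - h')) * ν l
                = (μ h' * ν l) * ν (i + s + 1 - h') := by ring
            rw [e]; exact Ideal.mul_mem_right _ _ hlow
        have hrest : ∑ h' ∈ Finset.Icc (s + 1) (s + i),
            μ j * (μ h' * ν (i + s + 1 - h')) ∈ K.radical := Ideal.sum_mem _ hterm
        have hsum : μ j * γ i = μ j * μ j + ∑ h' ∈ Finset.Icc (s + 1) (s + i),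
            μ j * (μ h' * ν (i + s + 1 - h')) := by
          rw [he, mul_add, Finset.mul_sum]
        have hmul : μ j * γ i ∈ K.radical := Ideal.mul_mem_left _ _ hγQ
        have h1 := Submodule.sub_mem _ hmul hrest
        rw [hsum] at h1
        have h2 : μ j * μ j ∈ K.radical := by simpa using h1
        have : μ j ^ 2 ∈ K.radical := by rwa [pow_two]
        exact Ideal.mem_radical_of_pow_mem this
  -- generators are in the radical
  have hgen : ∀ h k, s + 1 ≤ h → h ≤ u → 1 ≤ k → k ≤ v → μ h * ν k ∈ K.radical := by
    intro h k h1 h2 k1 k2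
    have := (key (h + k - s - 1) (by omega) (by omega)).1 h h1 (by omega)
    have e : (h + k - s - 1) + s + 1 - h = k := by omega
    rwa [e] at this
  have hext : ∀ j, 1 ≤ j → j ≤ s → μ j ∈ K.radical := by
    intro j hj1 hjs
    exact (key (u - s + j) (by omega) (by omega)).2 j hj1 hjs rfl
  -- K ≤ I ⊓ J
  have hKIJ : K ≤ I ⊓ J := by
    rw [hKdef, Ideal.span_le]
    rintro x ⟨i, ⟨hi1, hiN⟩, rfl⟩
    have hterm : ∀ h' ∈ Finset.Icc (s + 1) (s + i),
        μ h' * ν (i + s + 1 - h') ∈ I ⊓ J := by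
      intro h' hmem
      rw [Finset.mem_Icc] at hmem
      rw [Submodule.mem_inf]
      constructor
      · by_cases hu' : u < h'
        · rw [hμ0 h' hu', zero_mul]; exact Submodule.zero_mem _
        · exact Ideal.mul_mem_right _ _
            (Ideal.subset_span ⟨h', ⟨by omega, by omega⟩, rfl⟩)
      · by_cases hv' : v < i + s + 1 - h'
        · rw [hν0 _ hv', mul_zero]; exact Submodule.zero_mem _
        · exact Ideal.mul_mem_left _ _
            (Ideal.subset_span ⟨i + s + 1 - h', ⟨by omega, by omega⟩, rfl⟩)
    rcases hdecomp i hi1 with ⟨he, _⟩ | ⟨he, hiu1, hiu2⟩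
    · rw [he]; exact Ideal.sum_mem _ hterm
    · rw [he]
      refine Ideal.add_mem _ ?_ (Ideal.sum_mem _ hterm)
      rw [Submodule.mem_inf]
      constructor
      · exact Ideal.subset_span ⟨i + s - u, ⟨by omega, by omega⟩, rfl⟩
      · have hm := hsub (i + s - u) (by omega) (by omega)
          (Ideal.subset_span ⟨i + s - u, ⟨by omega, le_refl _⟩, rfl⟩)
        have hmono : Ideal.span (ν '' Set.Icc 1 (i + s - u)) ≤ J := by
          rw [hJdef]
          exact Ideal.span_mono (Set.image_mono (Set.Icc_subset_Icc (le_refl 1) (by omega)))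
        exact hmono hm
  -- I ⊓ J ≤ K.radical
  have hIJK : I ⊓ J ≤ K.radical := by
    intro x hx
    rw [Submodule.mem_inf] at hx
    obtain ⟨hxI, hxJ⟩ := hx
    have hsplit : x ∈ Ideal.span (μ '' Set.Icc 1 s) ⊔ Ideal.span (μ '' Set.Icc (s + 1) u) := by
      refine Ideal.span_le.mpr ?_ hxI
      rintro t ⟨j, ⟨hj1, hju⟩, rfl⟩
      by_cases hjs : j ≤ s
      · exact Ideal.mem_sup_left (Ideal.subset_span ⟨j, ⟨hj1, hjs⟩, rfl⟩)
      · exact Ideal.mem_sup_right (Ideal.subset_span ⟨j, ⟨by omega, hju⟩, rfl⟩)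
    rw [Submodule.mem_sup] at hsplit
    obtain ⟨a, ha, b, hb, hab⟩ := hsplit
    have hA : Ideal.span (μ '' Set.Icc 1 s) ≤ K.radical := by
      rw [Ideal.span_le]
      rintro t ⟨j, ⟨hj1, hjs⟩, rfl⟩
      exact hext j hj1 hjs
    have hax : a * x ∈ K.radical := Ideal.mul_mem_right _ _ (hA ha)
    have hbx : b * x ∈ K.radical := by
      refine mul_span_mem hxJ ?_
      rintro t ⟨k, ⟨hk1, hkv⟩, rfl⟩
      rw [mul_comm]
      refine mul_span_mem hb ?_
      rintro t' ⟨h, ⟨hh1, hhu⟩, rfl⟩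
      rw [mul_comm]
      exact hgen h k hh1 hhu hk1 hkv
    have hx2 : x * x ∈ K.radical := by
      have e : x * x = a * x + b * x := by rw [← hab]; ring
      rw [e]; exact Submodule.add_mem _ hax hbx
    have : x ^ 2 ∈ K.radical := by rwa [pow_two]
    exact Ideal.mem_radical_of_pow_mem this
  apply le_antisymm
  · calc (I ⊓ J).radical ≤ K.radical.radical := Ideal.radical_mono hIJK
      _ = K.radical := Ideal.radical_idem K
  · exact Ideal.radical_mono hKIJ




/-- **Main Theorem** (Barile). With `I = (μ 1, …, μ u)`, `J = (ν 1, …, ν v)`,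
`1 ≤ s < u`, `s ≤ v`, `(μ 1, …, μ i) ⊆ (ν 1, …, ν i)` for `1 ≤ i ≤ s`, and with the
convention `μ h = 0` for `h > u`, `ν k = 0` for `k > v`, define
`γ i = ∑_{h+k = i+s+1, h ≥ s+1} μ h * ν k` for `1 ≤ i ≤ u - s` and for `u+1 ≤ i`, and
`γ i = μ (i-u+s) + ∑_{h+k = i+s+1, h ≥ s+1} μ h * ν k` for `u-s+1 ≤ i ≤ u`.
Then `√(I ∩ J) = √(γ 1, …, γ (u+v-s-1))` if `s ≤ v - 2`, and
`√(I ∩ J) = √(γ 1, …, γ u)` if `v - 1 ≤ s ≤ v`. -/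
theorem stmt_2 {R : Type*} [CommRing R] [IsNoetherianRing R]
    (u v s : ℕ) (μ ν : ℕ → R)
    (hs : 1 ≤ s) (hsu : s < u) (hsv : s ≤ v)
    (hμ0 : ∀ h, u < h → μ h = 0) (hν0 : ∀ k, v < k → ν k = 0)
    (I J : Ideal R)
    (hI : I = Ideal.span (μ '' Set.Icc 1 u)) (hJ : J = Ideal.span (ν '' Set.Icc 1 v))
    (hsub : ∀ i, 1 ≤ i → i ≤ s →
      Ideal.span (μ '' Set.Icc 1 i) ≤ Ideal.span (ν '' Set.Icc 1 i))
    (γ : ℕ → R)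
    (hγ1 : ∀ i, 1 ≤ i → (i ≤ u - s ∨ u + 1 ≤ i) →
      γ i = ∑ h ∈ Finset.Icc (s + 1) (s + i), μ h * ν (i + s + 1 - h))
    (hγ2 : ∀ i, u - s + 1 ≤ i → i ≤ u →
      γ i = μ (i + s - u) + ∑ h ∈ Finset.Icc (s + 1) (s + i), μ h * ν (i + s + 1 - h)) :
    (s + 2 ≤ v →
      (I ⊓ J).radical = (Ideal.span (γ '' Set.Icc 1 (u + v - s - 1))).radical) ∧
    (v ≤ s + 1 →
      (I ⊓ J).radical = (Ideal.span (γ '' Set.Icc 1 u)).radical) := by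
  subst hI hJ
  constructor
  · intro hv2
    exact barile_core u v s (u + v - s - 1) μ ν hs hsu hsv hμ0 hν0 hsub γ hγ1 hγ2
      (by omega) (by omega)
  · intro hv1
    exact barile_core u v s u μ ν hs hsu hsv hμ0 hν0 hsub γ hγ1 hγ2
      (by omega) (by omega)
end

section
/- Let $R$ be a commutative Noetherian ring, $I=(\mu_1,\dots,\mu_u)$ and $J=(\nu_1,\dots,\nu_v)$ ideals of $R$, and suppose there is a positive integer $s$ with $s<u$, $s\le v$, such that $(\mu_1,\dots,\mu_i)\subseteq(\nu_1,\dots,\nu_i)$ for all $1\le i\le s$. Then the arithmetical rank of $I\cap J$ satisfies ara$(I\cap J)\le u+v-s-1$ if $s\le v-2$, and ara$(I\cap J)\le u$ if $v-1\le s\le v$. -/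
/-!
Up to radical, `I ∩ J` is generated by the `μ k` with `k ≤ s` (which lie in `J`) and the products
`μ i * ν j` with `i > s`: these span an ideal between `I * J` and `I ∩ J`. Give `μ i * ν j` degree
`i + j - s - 2` and `μ k` degree `u - s + k - 1`. The product of two distinct generators of equal
degree then lies in the ideal of the generators of lower degree, because
`(μ i ν j)(μ i' ν j') = (μ i' ν j)(μ i ν j')` and `μ k ∈ (ν 1, …, ν k)`. By the lemma of Schmitt
and Vogel the sums of the generators of each degree generate the same radical (by induction on the
degree, `f² = f · (sum of its degree) - f · (the others of that degree)`), and there are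
`max u (u + v - s - 1)` degrees.
-/

open Finset

namespace Ideal

variable {R α : Type*} [CommRing R]

theorem radical_inf_eq_radical_of_mul_le {I J K : Ideal R} (hK : K ≤ I ⊓ J) (hIJ : I * J ≤ K) :
    (I ⊓ J).radical = K.radical := by
  refine le_antisymm ?_ (radical_mono hK)
  rw [radical_inf, ← radical_mul]
  exact radical_mono hIJ

section SchmittVogel

variable (T : Finset α) (f : α → R) (deg : α → ℕ)

theorem mem_radical_of_schmittVogel {G : Ideal R}
    (hG : ∀ t ∈ T, ∑ x ∈ T with deg x = deg t, f x ∈ G)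
    (hSV : ∀ t ∈ T, ∀ t' ∈ T, t ≠ t' → deg t = deg t' →
      f t * f t' ∈ span (f '' {x | x ∈ T ∧ deg x < deg t})) :
    ∀ t ∈ T, f t ∈ G.radical := by
  classical
  suffices ∀ n, ∀ t ∈ T, deg t = n → f t ∈ G.radical from fun t ht => this _ t ht rfl
  intro n
  induction n using Nat.strong_induction_on with
  | _ n ih =>
  rintro t ht rfl
  have hlower : span (f '' {x | x ∈ T ∧ deg x < deg t}) ≤ G.radical :=
    span_le.2 <| by rintro _ ⟨x, ⟨hx, hlt⟩, rfl⟩; exact ih _ hlt x hx rfl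
  have hrest : f t * ∑ x ∈ {x ∈ T | deg x = deg t}.erase t, f x ∈ G.radical := by
    rw [Finset.mul_sum]
    refine sum_mem _ fun x hx => hlower ?_
    obtain ⟨hxt, hx⟩ := mem_erase.1 hx
    obtain ⟨hxT, hdeg⟩ := mem_filter.1 hx
    exact hSV t ht x hxT (Ne.symm hxt) hdeg.symm
  have hsum : f t * ∑ x ∈ T with deg x = deg t, f x ∈ G.radical :=
    mul_mem_left _ _ (le_radical (hG t ht))
  have htmem : t ∈ {x ∈ T | deg x = deg t} := mem_filter.2 ⟨ht, rfl⟩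
  rw [← add_sum_erase _ _ htmem, mul_add] at hsum
  exact mem_radical_of_pow_mem (m := 2) <| by
    simpa only [pow_two] using (Submodule.add_mem_iff_left _ hrest).1 hsum

theorem radical_span_eq_of_schmittVogel {N : ℕ} (hdeg : ∀ t ∈ T, deg t < N)
    (hSV : ∀ t ∈ T, ∀ t' ∈ T, t ≠ t' → deg t = deg t' →
      f t * f t' ∈ span (f '' {x | x ∈ T ∧ deg x < deg t})) :
    (span (f '' T)).radical =
      (span (Set.range fun d : Fin N => ∑ t ∈ T with deg t = d, f t)).radical := by
  refine le_antisymm (radical_le_radical_iff.2 (span_le.2 ?_)) (radical_mono (span_le.2 ?_))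
  · rintro _ ⟨t, ht, rfl⟩
    refine mem_radical_of_schmittVogel T f deg (fun t ht => subset_span ?_) hSV t ht
    exact ⟨⟨deg t, hdeg t ht⟩, rfl⟩
  · rintro _ ⟨d, rfl⟩
    exact sum_mem _ fun x hx => subset_span ⟨x, (mem_filter.1 hx).1, rfl⟩

end SchmittVogel

end Ideal

namespace Barile

variable {R : Type*} [CommRing R] (u v s : ℕ) (μ ν : ℕ → R)

/-- `Sum.inl k` stands for the generator `μ k` and `Sum.inr (i, j)` for `μ i * ν j`. -/
def index : Finset (ℕ ⊕ ℕ × ℕ) := (Icc 1 s).disjSum (Icc (s + 1) u ×ˢ Icc 1 v)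

def gen : ℕ ⊕ ℕ × ℕ → R := Sum.elim μ fun p => μ p.1 * ν p.2

def degree : ℕ ⊕ ℕ × ℕ → ℕ :=
  Sum.elim (fun k => u - s + k - 1) fun p => p.1 + p.2 - (s + 2)

abbrev lower (n : ℕ) : Ideal R :=
  Ideal.span (gen μ ν '' {x | x ∈ index u v s ∧ degree u s x < n})

variable {u v s μ ν}

theorem inl_mem_index {k : ℕ} : .inl k ∈ index u v s ↔ 1 ≤ k ∧ k ≤ s := by
  simp [index]

theorem inr_mem_index {i j : ℕ} :
    .inr (i, j) ∈ index u v s ↔ s + 1 ≤ i ∧ i ≤ u ∧ 1 ≤ j ∧ j ≤ v := by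
  simp [index, and_assoc]

theorem gen_mem_lower {x : ℕ ⊕ ℕ × ℕ} (hx : x ∈ index u v s) {n : ℕ} (hn : degree u s x < n) :
    gen μ ν x ∈ lower u v s μ ν n :=
  Ideal.subset_span ⟨x, ⟨hx, hn⟩, rfl⟩

theorem mul_mem_lower_of_lt {i j i' j' : ℕ} (hi : s + 1 ≤ i) (hi' : i' ≤ u) (hj : j ≤ v)
    (hj' : 1 ≤ j') (hii' : i < i') (hsum : i + j = i' + j') :
    μ i * ν j * (μ i' * ν j') ∈ lower u v s μ ν (i + j - (s + 2)) := by
  rw [show μ i * ν j * (μ i' * ν j') = μ i' * ν j * gen μ ν (.inr (i, j')) by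
    simp only [gen, Sum.elim_inr]; ring]
  refine Ideal.mul_mem_left _ _ (gen_mem_lower (inr_mem_index.2 ⟨hi, by omega⟩) ?_)
  simp only [degree, Sum.elim_inr]
  omega

theorem mul_mem_lower_of_mem_span {k i j : ℕ} (hk : μ k ∈ Ideal.span (ν '' Set.Icc 1 k))
    (hi : s + 1 ≤ i) (hiu : i ≤ u) (hkj : k < j) (hj : j ≤ v) :
    μ k * (μ i * ν j) ∈ lower u v s μ ν (i + j - (s + 2)) := by
  suffices Ideal.span (ν '' Set.Icc 1 k) * Ideal.span {μ i * ν j} ≤ lower u v s μ ν _ from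
    this (Ideal.mul_mem_mul hk (Ideal.mem_span_singleton_self _))
  rw [Ideal.span_mul_span', Ideal.span_le]
  rintro _ ⟨_, ⟨j', hj', rfl⟩, _, rfl, rfl⟩
  rw [Set.mem_Icc] at hj'
  change ν j' * (μ i * ν j) ∈ _
  rw [show ν j' * (μ i * ν j) = ν j * gen μ ν (.inr (i, j')) by simp only [gen, Sum.elim_inr]; ring]
  refine Ideal.mul_mem_left _ _ (gen_mem_lower (inr_mem_index.2 ⟨hi, hiu, by omega⟩) ?_)
  simp only [degree, Sum.elim_inr]
  omega

theorem gen_mul_gen_mem_lower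
    (hμ : ∀ k, 1 ≤ k → k ≤ s → μ k ∈ Ideal.span (ν '' Set.Icc 1 k)) :
    ∀ t ∈ index u v s, ∀ t' ∈ index u v s, t ≠ t' → degree u s t = degree u s t' →
      gen μ ν t * gen μ ν t' ∈ lower u v s μ ν (degree u s t) := by
  rintro (k | ⟨i, j⟩) ht (k' | ⟨i', j'⟩) ht' hne hdeg <;>
    simp only [inl_mem_index, inr_mem_index] at ht ht' <;>
    simp only [degree, Sum.elim_inl, Sum.elim_inr] at hdeg ⊢
  · exact absurd (congrArg Sum.inl (by omega)) hne
  · rw [hdeg]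
    exact mul_mem_lower_of_mem_span (hμ k ht.1 ht.2) ht'.1 ht'.2.1 (by omega) ht'.2.2.2
  · rw [mul_comm]
    exact mul_mem_lower_of_mem_span (hμ k' ht'.1 ht'.2) ht.1 ht.2.1 (by omega) ht.2.2.2
  · rcases lt_trichotomy i i' with h | h | h
    · exact mul_mem_lower_of_lt ht.1 ht'.2.1 ht.2.2.2 ht'.2.2.1 h (by omega)
    · exact absurd (congrArg Sum.inr (Prod.ext h (by omega))) hne
    · rw [mul_comm, hdeg]
      exact mul_mem_lower_of_lt ht'.1 ht.2.1 ht'.2.2.2 ht.2.2.1 h (by omega)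

theorem span_gen_le_inf (hsu : s ≤ u) (hsv : s ≤ v)
    (hμ : ∀ k, 1 ≤ k → k ≤ s → μ k ∈ Ideal.span (ν '' Set.Icc 1 k)) :
    Ideal.span (gen μ ν '' index u v s) ≤
      Ideal.span (μ '' Set.Icc 1 u) ⊓ Ideal.span (ν '' Set.Icc 1 v) := by
  rw [Ideal.span_le]
  rintro _ ⟨k | ⟨i, j⟩, hx, rfl⟩ <;> simp only [mem_coe, inl_mem_index, inr_mem_index] at hx
  · refine ⟨Ideal.subset_span ⟨k, ⟨hx.1, by omega⟩, rfl⟩, ?_⟩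
    exact Ideal.span_mono (Set.image_mono (Set.Icc_subset_Icc_right (by omega))) (hμ k hx.1 hx.2)
  · exact ⟨Ideal.mul_mem_right _ _ (Ideal.subset_span ⟨i, ⟨by omega, hx.2.1⟩, rfl⟩),
      Ideal.mul_mem_left _ _ (Ideal.subset_span ⟨j, hx.2.2, rfl⟩)⟩

theorem mul_le_span_gen :
    Ideal.span (μ '' Set.Icc 1 u) * Ideal.span (ν '' Set.Icc 1 v) ≤
      Ideal.span (gen μ ν '' index u v s) := by
  rw [Ideal.span_mul_span', Ideal.span_le]
  rintro _ ⟨_, ⟨i, hi, rfl⟩, _, ⟨j, hj, rfl⟩, rfl⟩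
  rw [Set.mem_Icc] at hi hj
  by_cases his : i ≤ s
  · exact Ideal.mul_mem_right _ _ (Ideal.subset_span ⟨.inl i, inl_mem_index.2 ⟨hi.1, his⟩, rfl⟩)
  · exact Ideal.subset_span ⟨.inr (i, j), inr_mem_index.2 ⟨by omega, hi.2, hj⟩, rfl⟩

theorem exists_radical_inf_eq (hsu : s ≤ u) (hsv : s ≤ v)
    (hsub : ∀ i, 1 ≤ i → i ≤ s →
      Ideal.span (μ '' Set.Icc 1 i) ≤ Ideal.span (ν '' Set.Icc 1 i))
    {N : ℕ} (hu : u ≤ N) (huv : u + v - s - 1 ≤ N) :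
    ∃ γ : Fin N → R, (Ideal.span (μ '' Set.Icc 1 u) ⊓ Ideal.span (ν '' Set.Icc 1 v)).radical =
      (Ideal.span (Set.range γ)).radical := by
  have hμ (k : ℕ) (h1 : 1 ≤ k) (h2 : k ≤ s) : μ k ∈ Ideal.span (ν '' Set.Icc 1 k) :=
    hsub k h1 h2 (Ideal.subset_span ⟨k, ⟨h1, le_rfl⟩, rfl⟩)
  have hdeg : ∀ t ∈ index u v s, degree u s t < N := by
    rintro (k | ⟨i, j⟩) ht <;> simp only [inl_mem_index, inr_mem_index] at ht <;>
      simp only [degree, Sum.elim_inl, Sum.elim_inr] <;> omega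
  exact ⟨_, (Ideal.radical_inf_eq_radical_of_mul_le (span_gen_le_inf hsu hsv hμ)
    mul_le_span_gen).trans (Ideal.radical_span_eq_of_schmittVogel _ _ _ hdeg
      (gen_mul_gen_mem_lower hμ))⟩

end Barile

theorem stmt_3_general {R : Type*} [CommRing R]
    (u v s : ℕ) (μ ν : ℕ → R)
    (hsu : s < u) (hsv : s ≤ v)
    (I J : Ideal R)
    (hI : I = Ideal.span (μ '' Set.Icc 1 u)) (hJ : J = Ideal.span (ν '' Set.Icc 1 v))
    (hsub : ∀ i, 1 ≤ i → i ≤ s →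
      Ideal.span (μ '' Set.Icc 1 i) ≤ Ideal.span (ν '' Set.Icc 1 i)) :
    (s + 2 ≤ v → ∃ γ : Fin (u + v - s - 1) → R,
      (I ⊓ J).radical = (Ideal.span (Set.range γ)).radical) ∧
    (v ≤ s + 1 → ∃ γ : Fin u → R,
      (I ⊓ J).radical = (Ideal.span (Set.range γ)).radical) := by
  subst hI hJ
  exact ⟨fun _ => Barile.exists_radical_inf_eq hsu.le hsv hsub (by omega) le_rfl,
    fun _ => Barile.exists_radical_inf_eq hsu.le hsv hsub le_rfl (by omega)⟩

/-- **Corollary** (Barile). With `I = (μ 1, …, μ u)`, `J = (ν 1, …, ν v)`, `1 ≤ s < u`,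
`s ≤ v`, and `(μ 1, …, μ i) ⊆ (ν 1, …, ν i)` for `1 ≤ i ≤ s`, the arithmetical rank of
`I ∩ J` is at most `u + v - s - 1` if `s ≤ v - 2`, and at most `u` if `v - 1 ≤ s ≤ v`. -/
theorem stmt_3 {R : Type*} [CommRing R] [IsNoetherianRing R]
    (u v s : ℕ) (μ ν : ℕ → R)
    (hs : 1 ≤ s) (hsu : s < u) (hsv : s ≤ v)
    (I J : Ideal R)
    (hI : I = Ideal.span (μ '' Set.Icc 1 u)) (hJ : J = Ideal.span (ν '' Set.Icc 1 v))
    (hsub : ∀ i, 1 ≤ i → i ≤ s →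
      Ideal.span (μ '' Set.Icc 1 i) ≤ Ideal.span (ν '' Set.Icc 1 i)) :
    (s + 2 ≤ v → ∃ γ : Fin (u + v - s - 1) → R,
      (I ⊓ J).radical = (Ideal.span (Set.range γ)).radical) ∧
    (v ≤ s + 1 → ∃ γ : Fin u → R,
      (I ⊓ J).radical = (Ideal.span (Set.range γ)).radical) :=
  stmt_3_general u v s μ ν hsu hsv I J hI hJ hsub
end

section
/- Let $R$ be a commutative Noetherian ring, $I=(\mu_1,\dots,\mu_u)$ and $J=(\nu_1,\dots,\nu_v)$ ideals of $R$, with a positive integer $s$, $s<u$, $s\le v$, such that $(\mu_1,\dots,\mu_i)\subseteq(\nu_1,\dots,\nu_i)$ for all $1\le i\le s$. Set $r=u+v-s-1$ if $s\le v-2$ and $r=u$ if $v-1\le s\le v$. Then there exist $\gamma_1,\dots,\gamma_r\in R$ generating $I\cap J$ up to radical which moreover satisfy $(\gamma_1,\dots,\gamma_i)\subseteq(\nu_1,\dots,\nu_i)$ for all $1\le i\le \min(r,v)$. -/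
/-- With the hypotheses of the Corollary, and `r = u + v - s - 1` if `s ≤ v - 2`, `r = u`
otherwise, there exist `γ 1, …, γ r` generating `I ∩ J` up to radical which moreover
satisfy `(γ 1, …, γ i) ⊆ (ν 1, …, ν i)` for all `1 ≤ i ≤ min r v`. -/
theorem stmt_4 {R : Type*} [CommRing R] [IsNoetherianRing R]
    (u v s : ℕ) (μ ν : ℕ → R)
    (hs : 1 ≤ s) (hsu : s < u) (hsv : s ≤ v)
    (I J : Ideal R)
    (hI : I = Ideal.span (μ '' Set.Icc 1 u)) (hJ : J = Ideal.span (ν '' Set.Icc 1 v))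
    (hsub : ∀ i, 1 ≤ i → i ≤ s →
      Ideal.span (μ '' Set.Icc 1 i) ≤ Ideal.span (ν '' Set.Icc 1 i))
    (r : ℕ) (hr : r = if s + 2 ≤ v then u + v - s - 1 else u) :
    ∃ γ : ℕ → R,
      (I ⊓ J).radical = (Ideal.span (γ '' Set.Icc 1 r)).radical ∧
      ∀ i, 1 ≤ i → i ≤ min r v →
        Ideal.span (γ '' Set.Icc 1 i) ≤ Ideal.span (ν '' Set.Icc 1 i) := by
  classical
  have hur : u ≤ r := by split_ifs at hr <;> omega
  have hdr : ∀ d, s + 2 ≤ d → d ≤ u + v → d - s - 1 ≤ r := by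
    intro d h1 h2
    split_ifs at hr <;> omega
  set γ : ℕ → R := fun t =>
    (if u + 1 ≤ t + s ∧ t ≤ u then μ (t + s - u) else 0) +
      ∑ j ∈ Finset.Icc (max 1 (s + 1 + t - u)) (min t v), μ (s + 1 + t - j) * ν j
    with hγ
  have hγd : ∀ t, γ t = (if u + 1 ≤ t + s ∧ t ≤ u then μ (t + s - u) else 0) +
      ∑ j ∈ Finset.Icc (max 1 (s + 1 + t - u)) (min t v), μ (s + 1 + t - j) * ν j :=
    fun t => rfl
  set G := Ideal.span (γ '' Set.Icc 1 r) with hG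
  set K := G.radical with hK
  have hmem : ∀ (f : ℕ → R) (a b k : ℕ), a ≤ k → k ≤ b →
      f k ∈ Ideal.span (f '' Set.Icc a b) :=
    fun f a b k h1 h2 => Ideal.subset_span ⟨k, ⟨h1, h2⟩, rfl⟩
  have hmono : ∀ (f : ℕ → R) (a b : ℕ), a ≤ b →
      Ideal.span (f '' Set.Icc 1 a) ≤ Ideal.span (f '' Set.Icc 1 b) :=
    fun f a b h => Ideal.span_mono (Set.image_mono (Set.Icc_subset_Icc le_rfl h))
  have hγG : ∀ t, 1 ≤ t → t ≤ r → γ t ∈ K :=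
    fun t h1 h2 => Ideal.le_radical (hmem γ 1 r t h1 h2)
  have hsq : ∀ x : R, x * x ∈ K → x ∈ K := by
    intro x hx
    rw [hK, Ideal.mem_radical_iff] at hx ⊢
    obtain ⟨n, hn⟩ := hx
    exact ⟨2 * n, by rwa [pow_mul, pow_two]⟩
  -- main strong induction: all products μ i * ν j (i > s) and all μ l (l ≤ s) are in K
  have main : ∀ d : ℕ,
      (∀ i j, s < i → i ≤ u → 1 ≤ j → j ≤ v → i + j = d → μ i * ν j ∈ K) ∧
      (∀ l, 1 ≤ l → l ≤ s → u + 1 + l = d → μ l ∈ K) := by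
    intro d
    induction d using Nat.strong_induction_on with
    | _ d ih =>
      have cross : ∀ i' j' l, s < i' → i' ≤ u → 1 ≤ j' → j' ≤ v → 1 ≤ l → l ≤ s →
          i' + l < d → ∀ y ∈ Ideal.span (ν '' Set.Icc 1 l), μ i' * ν j' * y ∈ K := by
        intro i' j' l hi1 hi2 hj1 hj2 hl1 hl2 hlt y hy
        induction hy using Submodule.span_induction with
        | mem z hz =>
          obtain ⟨k, ⟨hk1, hk2⟩, rfl⟩ := hz
          have h1 : μ i' * ν k ∈ K :=
            (ih (i' + k) (by omega)).1 i' k hi1 hi2 hk1 (le_trans hk2 (le_trans hl2 hsv)) rfl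
          rw [show μ i' * ν j' * ν k = μ i' * ν k * ν j' by ring]
          exact Ideal.mul_mem_right _ _ h1
        | zero => simp
        | add a b _ _ iha ihb => rw [mul_add]; exact Ideal.add_mem _ iha ihb
        | smul c a _ iha =>
          rw [smul_eq_mul, show μ i' * ν j' * (c * a) = c * (μ i' * ν j' * a) by ring]
          exact Ideal.mul_mem_left _ _ iha
      constructor
      · intro i j hi hiu hj hjv hd
        set t := i + j - s - 1 with htdef
        have hts : t + s + 1 = i + j := by omega
        have ht1 : 1 ≤ t := by omega
        have ht2 : t ≤ r := by
          have := hdr d (by omega) (by omega)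
          omega
        have hjT : j ∈ Finset.Icc (max 1 (s + 1 + t - u)) (min t v) :=
          Finset.mem_Icc.mpr ⟨max_le hj (by omega), le_min (by omega) hjv⟩
        have hij : s + 1 + t - j = i := by omega
        have hkey : μ i * ν j * (μ i * ν j) = μ i * ν j * γ t -
            (μ i * ν j * (if u + 1 ≤ t + s ∧ t ≤ u then μ (t + s - u) else 0) +
              ∑ j' ∈ (Finset.Icc (max 1 (s + 1 + t - u)) (min t v)).erase j,
                μ i * ν j * (μ (s + 1 + t - j') * ν j')) := by
          rw [hγd t, mul_add, Finset.mul_sum, ← Finset.add_sum_erase _ _ hjT, hij]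
          ring
        have hrest1 : μ i * ν j *
            (if u + 1 ≤ t + s ∧ t ≤ u then μ (t + s - u) else 0) ∈ K := by
          split_ifs with hc
          · exact cross i j (t + s - u) hi hiu hj hjv (by omega) (by omega) (by omega)
              (μ (t + s - u)) (hsub (t + s - u) (by omega) (by omega)
                (hmem μ 1 (t + s - u) (t + s - u) (by omega) le_rfl))
          · simp
        have hrest2 : ∀ j' ∈ (Finset.Icc (max 1 (s + 1 + t - u)) (min t v)).erase j,
            μ i * ν j * (μ (s + 1 + t - j') * ν j') ∈ K := by
          intro j' hj'
          obtain ⟨hne, hj'T⟩ := Finset.mem_erase.mp hj'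
          rw [Finset.mem_Icc] at hj'T
          have hj'1 : 1 ≤ j' := le_trans (le_max_left _ _) hj'T.1
          have hj'u : s + 1 + t - u ≤ j' := le_trans (le_max_right _ _) hj'T.1
          have hj't : j' ≤ t := le_trans hj'T.2 (min_le_left _ _)
          have hj'v : j' ≤ v := le_trans hj'T.2 (min_le_right _ _)
          have hi'1 : s < s + 1 + t - j' := by omega
          have hi'2 : s + 1 + t - j' ≤ u := by omega
          have hii' : (s + 1 + t - j') + j' = i + j := by omega
          rcases lt_or_gt_of_ne (show s + 1 + t - j' ≠ i by omega) with hlt | hgt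
          · have h1 : μ (s + 1 + t - j') * ν j ∈ K :=
              (ih ((s + 1 + t - j') + j) (by omega)).1 _ j hi'1 hi'2 hj hjv rfl
            rw [show μ i * ν j * (μ (s + 1 + t - j') * ν j') =
              μ (s + 1 + t - j') * ν j * (μ i * ν j') by ring]
            exact Ideal.mul_mem_right _ _ h1
          · have h1 : μ i * ν j' ∈ K :=
              (ih (i + j') (by omega)).1 i j' hi hiu hj'1 hj'v rfl
            rw [show μ i * ν j * (μ (s + 1 + t - j') * ν j') =
              μ i * ν j' * (μ (s + 1 + t - j') * ν j) by ring]
            exact Ideal.mul_mem_right _ _ h1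
        apply hsq
        rw [hkey]
        exact Ideal.sub_mem _ (Ideal.mul_mem_left _ _ (hγG t ht1 ht2))
          (Ideal.add_mem _ hrest1 (Ideal.sum_mem _ hrest2))
      · intro l hl1 hl2 hd
        set t := u - s + l with htdef
        have hts : t + s = u + l := by omega
        have ht1 : 1 ≤ t := by omega
        have ht2 : t ≤ r := by omega
        have hcond : u + 1 ≤ t + s ∧ t ≤ u := by omega
        have hlsu : t + s - u = l := by omega
        have hkey : μ l * μ l = μ l * γ t -
            ∑ j' ∈ Finset.Icc (max 1 (s + 1 + t - u)) (min t v),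
              μ l * (μ (s + 1 + t - j') * ν j') := by
          rw [hγd t, if_pos hcond, hlsu, mul_add, Finset.mul_sum]
          ring
        have hrest : ∀ j' ∈ Finset.Icc (max 1 (s + 1 + t - u)) (min t v),
            μ l * (μ (s + 1 + t - j') * ν j') ∈ K := by
          intro j' hj'T
          rw [Finset.mem_Icc] at hj'T
          have hj'1 : 1 ≤ j' := le_trans (le_max_left _ _) hj'T.1
          have hj'u : s + 1 + t - u ≤ j' := le_trans (le_max_right _ _) hj'T.1
          have hj't : j' ≤ t := le_trans hj'T.2 (min_le_left _ _)
          have hj'v : j' ≤ v := le_trans hj'T.2 (min_le_right _ _)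
          have hi'1 : s < s + 1 + t - j' := by omega
          have hi'2 : s + 1 + t - j' ≤ u := by omega
          rw [show μ l * (μ (s + 1 + t - j') * ν j') =
            μ (s + 1 + t - j') * ν j' * μ l by ring]
          exact cross _ j' l hi'1 hi'2 hj'1 hj'v hl1 hl2 (by omega)
            (μ l) (hsub l hl1 hl2 (hmem μ 1 l l hl1 le_rfl))
        apply hsq
        rw [hkey]
        exact Ideal.sub_mem _ (Ideal.mul_mem_left _ _ (hγG t ht1 ht2))
          (Ideal.sum_mem _ hrest)
  have hprod : ∀ i j, s < i → i ≤ u → 1 ≤ j → j ≤ v → μ i * ν j ∈ K :=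
    fun i j h1 h2 h3 h4 => (main (i + j)).1 i j h1 h2 h3 h4 rfl
  have hmu : ∀ l, 1 ≤ l → l ≤ s → μ l ∈ K :=
    fun l h1 h2 => (main (u + 1 + l)).2 l h1 h2 rfl
  refine ⟨γ, ?_, ?_⟩
  · apply le_antisymm
    · have hIJ : I ⊓ J ≤ K := by
        intro x hx
        apply hsq
        have hxx : x * x ∈ I * J := Ideal.mul_mem_mul hx.1 hx.2
        have hle : I * J ≤ K := by
          rw [hI, hJ, Ideal.span_mul_span']
          rw [Ideal.span_le]
          intro z hz
          rw [Set.mem_mul] at hz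
          obtain ⟨a, ha, b, hb, rfl⟩ := hz
          obtain ⟨i, ⟨hi1, hi2⟩, rfl⟩ := ha
          obtain ⟨j, ⟨hj1, hj2⟩, rfl⟩ := hb
          rcases le_or_gt i s with hcase | hcase
          · exact Ideal.mul_mem_right _ _ (hmu i hi1 hcase)
          · exact hprod i j hcase hi2 hj1 hj2
        exact hle hxx
      calc (I ⊓ J).radical ≤ K.radical := Ideal.radical_mono hIJ
        _ = G.radical := by rw [hK, Ideal.radical_idem]
    · apply Ideal.radical_mono
      rw [Ideal.span_le]
      rintro z ⟨t, ⟨ht1, ht2⟩, rfl⟩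
      rw [SetLike.mem_coe, Submodule.mem_inf]
      constructor
      · rw [hγd t, hI]
        apply Ideal.add_mem
        · split_ifs with hc
          · exact hmem μ 1 u (t + s - u) (by omega) (by omega)
          · exact Ideal.zero_mem _
        · apply Ideal.sum_mem
          intro j' hj'
          rw [Finset.mem_Icc] at hj'
          have h1 := le_trans (le_max_right _ _) hj'.1
          have h2 := le_trans hj'.2 (min_le_left _ _)
          exact Ideal.mul_mem_right _ _ (hmem μ 1 u (s + 1 + t - j') (by omega) (by omega))
      · rw [hγd t, hJ]
        apply Ideal.add_mem
        · split_ifs with hc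
          · exact hmono ν (t + s - u) v (by omega)
              (hsub (t + s - u) (by omega) (by omega)
                (hmem μ 1 (t + s - u) (t + s - u) (by omega) le_rfl))
          · exact Ideal.zero_mem _
        · apply Ideal.sum_mem
          intro j' hj'
          rw [Finset.mem_Icc] at hj'
          have h1 := le_trans (le_max_left _ _) hj'.1
          have h2 := le_trans hj'.2 (min_le_right _ _)
          exact Ideal.mul_mem_left _ _ (hmem ν 1 v j' h1 h2)
  · intro i hi1 hi2
    have hir : i ≤ r := le_trans hi2 (min_le_left _ _)
    have hiv : i ≤ v := le_trans hi2 (min_le_right _ _)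
    rw [Ideal.span_le]
    rintro z ⟨t, ⟨ht1, ht2⟩, rfl⟩
    rw [hγd t]
    apply Ideal.add_mem
    · split_ifs with hc
      · exact hmono ν (t + s - u) i (by omega)
          (hsub (t + s - u) (by omega) (by omega)
            (hmem μ 1 (t + s - u) (t + s - u) (by omega) le_rfl))
      · exact Ideal.zero_mem _
    · apply Ideal.sum_mem
      intro j' hj'
      rw [Finset.mem_Icc] at hj'
      have h1 := le_trans (le_max_left _ _) hj'.1
      have h2 := le_trans hj'.2 (min_le_left _ _)
      exact Ideal.mul_mem_left _ _ (hmem ν 1 i j' h1 (by omega))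
end

section
/- Let $R$ be a commutative Noetherian ring, $I=(\mu_1,\dots,\mu_u)$ and $J=(\nu_1,\dots,\nu_v)$ ideals of $R$, with a positive integer $s$, $s<u$, $s\le v$, such that $(\mu_1,\dots,\mu_i)\subseteq(\nu_1,\dots,\nu_i)$ for all $1\le i\le s$. Set $r=u+v-s-1$ if $s\le v-2$ and $r=u$ if $v-1\le s\le v$. Then there exist $\gamma_1,\dots,\gamma_r\in R$ generating $I\cap J$ up to radical and satisfying $(\gamma_1,\dots,\gamma_i)\subseteq(\mu_{s+1},\dots,\mu_{s+i})$ for all $1\le i\le u-s$, and $(\gamma_1,\dots,\gamma_i)\subseteq(\mu_{s+1},\dots,\mu_u,\mu_1,\dots,\mu_{i-u+s})$ for all $u-s+1\le i\le u$. -/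
/-!
Take `γ l = ∑_{i + j = l + 1} μ (s + i) * ν j`, plus `μ (l - (u - s))` when
`u - s < l ≤ u` (Schmitt–Vogel). Every `γ l` lies in `I ∩ J` because `μ t ∈ (ν 1, …, ν t)`
for `t ≤ s`. Conversely, let `p` be a prime containing all `γ l`. If some `μ (s + i)` and some
`ν j` lie outside `p`, take `i` and `j` minimal: then `γ (i + j - 1) ≡ μ (s + i) * ν j` modulo `p`,
since all other products and the extra term `μ t`, with `t < j`, lie in `p`, and this contradicts
primality. So either `J ⊆ p`, or all `μ (s + i)` lie in `p`, and then so does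
`μ t = γ (u - s + t) - (products)` for each `t ≤ s`, i.e. `I ⊆ p`.
-/

open Finset

lemma Ideal.span_image_Icc_le {R : Type*} [Semiring R] {K : Ideal R} {f : ℕ → R} {x y : ℕ}
    (h : ∀ l, x ≤ l → l ≤ y → f l ∈ K) : Ideal.span (f '' Set.Icc x y) ≤ K :=
  Ideal.span_le.2 <| Set.image_subset_iff.2 fun l hl => h l hl.1 hl.2

lemma Ideal.radical_eq_radical_of_le_of_isPrime {R : Type*} [CommRing R] {K L : Ideal R}
    (hLK : L ≤ K) (h : ∀ p : Ideal R, p.IsPrime → L ≤ p → K ≤ p) : K.radical = L.radical := by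
  refine le_antisymm (Ideal.radical_le_radical_iff.2 ?_) (Ideal.radical_mono hLK)
  rw [Ideal.radical_eq_sInf]
  exact le_sInf fun p ⟨hLp, hp⟩ => h p hp hLp

namespace SchmittVogel

variable {R : Type*} [CommRing R] (m n k : ℕ) (a b c : ℕ → R)

def levelPairs (m n l : ℕ) : Finset (ℕ × ℕ) :=
  (Icc 1 m ×ˢ Icc 1 n).filter fun q => q.1 + q.2 = l + 1

/-- The coefficient of `X ^ (l + 1)` in `(∑ a i X ^ i) * (∑ b j X ^ j)`, plus `c (l - m)` at
the levels `m < l ≤ m + k`. -/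
def gen (l : ℕ) : R :=
  (∑ q ∈ levelPairs m n l, a q.1 * b q.2) + if m < l ∧ l ≤ m + k then c (l - m) else 0

variable {m n k a b c}

lemma mem_levelPairs {l : ℕ} {q : ℕ × ℕ} :
    q ∈ levelPairs m n l ↔ (1 ≤ q.1 ∧ q.1 ≤ m) ∧ (1 ≤ q.2 ∧ q.2 ≤ n) ∧ q.1 + q.2 = l + 1 := by
  simp only [levelPairs, mem_filter, mem_product, mem_Icc, and_assoc]

lemma gen_mem_of_left {K : Ideal R} {l : ℕ} (ha : ∀ i, 1 ≤ i → i ≤ m → i ≤ l → a i ∈ K)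
    (hc : ∀ t, 1 ≤ t → t ≤ k → m + t ≤ l → c t ∈ K) : gen m n k a b c l ∈ K := by
  refine K.add_mem (K.sum_mem fun q hq => ?_) ?_
  · obtain ⟨⟨hq1, hqm⟩, ⟨hq2, -⟩, hql⟩ := mem_levelPairs.1 hq
    exact K.mul_mem_right _ (ha q.1 hq1 hqm (by omega))
  · split_ifs with hl
    · exact hc (l - m) (by omega) (by omega) (by omega)
    · exact K.zero_mem

lemma gen_mem_of_right {K : Ideal R} {l : ℕ} (hb : ∀ j, 1 ≤ j → j ≤ n → b j ∈ K)
    (hc : ∀ t, 1 ≤ t → t ≤ k → c t ∈ K) : gen m n k a b c l ∈ K := by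
  refine K.add_mem (K.sum_mem fun q hq => ?_) ?_
  · obtain ⟨-, ⟨hq2, hqn⟩, -⟩ := mem_levelPairs.1 hq
    exact K.mul_mem_left _ (hb q.2 hq2 hqn)
  · split_ifs with hl
    · exact hc (l - m) (by omega) (by omega)
    · exact K.zero_mem

lemma gen_sub_mul_mem_of_lowest {K : Ideal R} {i j : ℕ} (hi : 1 ≤ i) (him : i ≤ m)
    (hj : 1 ≤ j) (hjn : j ≤ n) (ha : ∀ i', 1 ≤ i' → i' < i → a i' ∈ K)
    (hb : ∀ j', 1 ≤ j' → j' < j → b j' ∈ K)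
    (hc : ∀ t, 1 ≤ t → t ≤ k → c t ∈ Ideal.span (b '' Set.Icc 1 t)) :
    gen m n k a b c (i + j - 1) - a i * b j ∈ K := by
  have hij : (i, j) ∈ levelPairs m n (i + j - 1) :=
    mem_levelPairs.2 ⟨⟨hi, him⟩, ⟨hj, hjn⟩, by omega⟩
  rw [gen, ← add_sum_erase _ _ hij, add_assoc, add_sub_cancel_left]
  refine K.add_mem (K.sum_mem fun q hq => ?_) ?_
  · obtain ⟨hne, hq⟩ := mem_erase.1 hq
    obtain ⟨⟨hq1, -⟩, ⟨hq2, -⟩, hql⟩ := mem_levelPairs.1 hq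
    rcases lt_or_ge q.1 i with hlt | hge
    · exact K.mul_mem_right _ (ha q.1 hq1 hlt)
    · exact K.mul_mem_left _ (hb q.2 hq2 (by grind))
  · split_ifs with hl
    · refine Ideal.span_le.2 ?_ (hc _ (by omega) (by omega))
      rintro _ ⟨j', ⟨hj'1, hj'2⟩, rfl⟩
      exact hb j' hj'1 (by omega)
    · exact K.zero_mem

lemma left_or_right_of_gen_mem {p : Ideal R} [p.IsPrime]
    (hc : ∀ t, 1 ≤ t → t ≤ k → c t ∈ Ideal.span (b '' Set.Icc 1 t))
    (hg : ∀ l, 1 ≤ l → l ≤ m + n - 1 → gen m n k a b c l ∈ p) :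
    (∀ i, 1 ≤ i → i ≤ m → a i ∈ p) ∨ (∀ j, 1 ≤ j → j ≤ n → b j ∈ p) := by
  classical
  by_contra! h
  obtain ⟨hA, hB⟩ := h
  let i := Nat.find hA
  let j := Nat.find hB
  obtain ⟨hi, him, hai⟩ := Nat.find_spec hA
  obtain ⟨hj, hjn, hbj⟩ := Nat.find_spec hB
  have ha : ∀ i', 1 ≤ i' → i' < i → a i' ∈ p := fun i' h1 hlt => by
    by_contra hn; exact Nat.find_min hA hlt ⟨h1, by omega, hn⟩
  have hb : ∀ j', 1 ≤ j' → j' < j → b j' ∈ p := fun j' h1 hlt => by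
    by_contra hn; exact Nat.find_min hB hlt ⟨h1, by omega, hn⟩
  have hprod : a i * b j ∈ p := by
    have h := p.sub_mem (hg (i + j - 1) (by omega) (by omega))
      (gen_sub_mul_mem_of_lowest hi him hj hjn ha hb hc)
    rwa [sub_sub_cancel] at h
  exact (Ideal.IsPrime.mem_or_mem ‹_› hprod).elim hai hbj

lemma extra_mem_of_gen_mem {K : Ideal R} {t : ℕ} (ht : 1 ≤ t) (htk : t ≤ k)
    (ha : ∀ i, 1 ≤ i → i ≤ m → a i ∈ K) (hg : gen m n k a b c (m + t) ∈ K) : c t ∈ K := by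
  rw [gen, if_pos ⟨by omega, by omega⟩, Nat.add_sub_cancel_left] at hg
  refine (K.add_mem_iff_right (K.sum_mem fun q hq => ?_)).1 hg
  obtain ⟨⟨hq1, hqm⟩, -⟩ := mem_levelPairs.1 hq
  exact K.mul_mem_right _ (ha q.1 hq1 hqm)

end SchmittVogel

open SchmittVogel in
theorem stmt_5_general {R : Type*} [CommRing R]
    (u v s : ℕ) (μ ν : ℕ → R)
    (hsu : s < u) (hsv : s ≤ v)
    (I J : Ideal R)
    (hI : I = Ideal.span (μ '' Set.Icc 1 u)) (hJ : J = Ideal.span (ν '' Set.Icc 1 v))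
    (hsub : ∀ i, 1 ≤ i → i ≤ s →
      Ideal.span (μ '' Set.Icc 1 i) ≤ Ideal.span (ν '' Set.Icc 1 i))
    (r : ℕ) (hr : r = if s + 2 ≤ v then u + v - s - 1 else u) :
    ∃ γ : ℕ → R,
      (I ⊓ J).radical = (Ideal.span (γ '' Set.Icc 1 r)).radical ∧
      (∀ i, 1 ≤ i → i ≤ u - s →
        Ideal.span (γ '' Set.Icc 1 i) ≤ Ideal.span (μ '' Set.Icc (s + 1) (s + i))) ∧
      (∀ i, u - s + 1 ≤ i → i ≤ u →
        Ideal.span (γ '' Set.Icc 1 i) ≤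
          Ideal.span (μ '' Set.Icc (s + 1) u ∪ μ '' Set.Icc 1 (i + s - u))) := by
  have hur : u ≤ r := by split_ifs at hr <;> omega
  have hvr : u - s + v - 1 ≤ r := by split_ifs at hr <;> omega
  have hc : ∀ t, 1 ≤ t → t ≤ s → μ t ∈ Ideal.span (ν '' Set.Icc 1 t) := fun t ht hts =>
    hsub t ht hts (Ideal.subset_span ⟨t, ⟨ht, le_rfl⟩, rfl⟩)
  refine ⟨gen (u - s) v s (fun i => μ (s + i)) ν μ,
    Ideal.radical_eq_radical_of_le_of_isPrime (Ideal.span_image_Icc_le fun l _ _ => ⟨?_, ?_⟩)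
      fun p hp hγ => ?_,
    fun i _ hi => Ideal.span_image_Icc_le fun l _ hl => ?_,
    fun i hi _ => Ideal.span_image_Icc_le fun l _ hl => ?_⟩
  · rw [hI]
    exact gen_mem_of_left (fun i h1 h2 _ => Ideal.subset_span ⟨s + i, ⟨by omega, by omega⟩, rfl⟩)
      fun t h1 h2 _ => Ideal.subset_span ⟨t, ⟨h1, by omega⟩, rfl⟩
  · rw [hJ]
    exact gen_mem_of_right (fun j h1 h2 => Ideal.subset_span ⟨j, ⟨h1, h2⟩, rfl⟩) fun t h1 h2 =>
      Ideal.span_mono (Set.image_mono (Set.Icc_subset_Icc le_rfl (by omega))) (hc t h1 h2)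
  · have hg : ∀ l, 1 ≤ l → l ≤ r → gen (u - s) v s (fun i => μ (s + i)) ν μ l ∈ p :=
      fun l h1 h2 => hγ (Ideal.subset_span ⟨l, ⟨h1, h2⟩, rfl⟩)
    rcases left_or_right_of_gen_mem hc fun l h1 h2 => hg l h1 (by omega) with hμ | hν
    · refine inf_le_left.trans (hI ▸ Ideal.span_image_Icc_le fun t h1 h2 => ?_)
      rcases le_or_gt t s with hts | hst
      · exact extra_mem_of_gen_mem h1 hts hμ (hg _ (by omega) (by omega))
      · simpa [Nat.add_sub_cancel' hst.le] using hμ (t - s) (by omega) (by omega)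
    · exact inf_le_right.trans (hJ ▸ Ideal.span_image_Icc_le fun j h1 h2 => hν j h1 h2)
  · exact gen_mem_of_left
      (fun i' h1 h2 h3 => Ideal.subset_span ⟨s + i', ⟨by omega, by omega⟩, rfl⟩)
      fun t h1 h2 h3 => absurd h3 (by omega)
  · exact gen_mem_of_left
      (fun i' h1 h2 _ => Ideal.subset_span (Or.inl ⟨s + i', ⟨by omega, by omega⟩, rfl⟩))
      fun t h1 h2 h3 => Ideal.subset_span (Or.inr ⟨t, ⟨h1, by omega⟩, rfl⟩)

/-- With the hypotheses of the Corollary, and `r = u + v - s - 1` if `s ≤ v - 2`, `r = u`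
otherwise, there exist `γ 1, …, γ r` generating `I ∩ J` up to radical which moreover
satisfy `(γ 1, …, γ i) ⊆ (μ (s+1), …, μ (s+i))` for `1 ≤ i ≤ u - s`, and
`(γ 1, …, γ i) ⊆ (μ (s+1), …, μ u, μ 1, …, μ (i-u+s))` for `u - s + 1 ≤ i ≤ u`. -/
theorem stmt_5 {R : Type*} [CommRing R] [IsNoetherianRing R]
    (u v s : ℕ) (μ ν : ℕ → R)
    (hs : 1 ≤ s) (hsu : s < u) (hsv : s ≤ v)
    (I J : Ideal R)
    (hI : I = Ideal.span (μ '' Set.Icc 1 u)) (hJ : J = Ideal.span (ν '' Set.Icc 1 v))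
    (hsub : ∀ i, 1 ≤ i → i ≤ s →
      Ideal.span (μ '' Set.Icc 1 i) ≤ Ideal.span (ν '' Set.Icc 1 i))
    (r : ℕ) (hr : r = if s + 2 ≤ v then u + v - s - 1 else u) :
    ∃ γ : ℕ → R,
      (I ⊓ J).radical = (Ideal.span (γ '' Set.Icc 1 r)).radical ∧
      (∀ i, 1 ≤ i → i ≤ u - s →
        Ideal.span (γ '' Set.Icc 1 i) ≤ Ideal.span (μ '' Set.Icc (s + 1) (s + i))) ∧
      (∀ i, u - s + 1 ≤ i → i ≤ u →
        Ideal.span (γ '' Set.Icc 1 i) ≤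
          Ideal.span (μ '' Set.Icc (s + 1) u ∪ μ '' Set.Icc 1 (i + s - u))) :=
  stmt_5_general u v s μ ν hsu hsv I J hI hJ hsub r hr
end

section
/- In the polynomial ring $R=K[x_1,\dots,x_7]$ over a field $K$, the ideal $I=(x_1x_2,\,x_1x_5,\,x_3x_5,\,x_5x_6,\,x_3x_4x_7,\,x_2x_3x_4)$ satisfies $\sqrt{I}=\sqrt{(\gamma_1',\gamma_2',\gamma_3')}$ where $\gamma_1'=(x_3x_4+x_5x_6)x_5$, $\gamma_2'=x_1x_5+(x_3x_4+x_5x_6)x_2$, and $\gamma_3'=x_1x_2+x_3x_5+(x_3x_4+x_5x_6)x_7$. -/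
open MvPolynomial

/-- **Example 1.** In `K[x₁,…,x₇]`, the ideal
`I = (x₁x₂, x₁x₅, x₃x₅, x₅x₆, x₃x₄x₇, x₂x₃x₄)` satisfies `√I = √(γ₁', γ₂', γ₃')` with
`γ₁' = (x₃x₄ + x₅x₆)x₅`, `γ₂' = x₁x₅ + (x₃x₄ + x₅x₆)x₂`,
`γ₃' = x₁x₂ + x₃x₅ + (x₃x₄ + x₅x₆)x₇`. Here `X 0, …, X 6` stand for `x₁, …, x₇`. -/
theorem stmt_6 (K : Type*) [Field K] :
    (Ideal.span {X 0 * X 1, X 0 * X 4, X 2 * X 4, X 4 * X 5,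
        X 2 * X 3 * X 6, X 1 * X 2 * X 3} : Ideal (MvPolynomial (Fin 7) K)).radical =
      (Ideal.span {(X 2 * X 3 + X 4 * X 5) * X 4,
        X 0 * X 4 + (X 2 * X 3 + X 4 * X 5) * X 1,
        X 0 * X 1 + X 2 * X 4 + (X 2 * X 3 + X 4 * X 5) * X 6}).radical := by
  set R := MvPolynomial (Fin 7) K
  set I : Ideal R := Ideal.span {X 0 * X 1, X 0 * X 4, X 2 * X 4, X 4 * X 5,
      X 2 * X 3 * X 6, X 1 * X 2 * X 3} with hI
  set J : Ideal R := Ideal.span {(X 2 * X 3 + X 4 * X 5) * X 4,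
      X 0 * X 4 + (X 2 * X 3 + X 4 * X 5) * X 1,
      X 0 * X 1 + X 2 * X 4 + (X 2 * X 3 + X 4 * X 5) * X 6} with hJ
  -- generator memberships
  have ha : (X 0 * X 1 : R) ∈ I := Ideal.subset_span (by simp)
  have hb : (X 0 * X 4 : R) ∈ I := Ideal.subset_span (by simp)
  have hc : (X 2 * X 4 : R) ∈ I := Ideal.subset_span (by simp)
  have hd : (X 4 * X 5 : R) ∈ I := Ideal.subset_span (by simp)
  have he : (X 2 * X 3 * X 6 : R) ∈ I := Ideal.subset_span (by simp)
  have hf : (X 1 * X 2 * X 3 : R) ∈ I := Ideal.subset_span (by simp)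
  have hg1 : ((X 2 * X 3 + X 4 * X 5) * X 4 : R) ∈ J := Ideal.subset_span (by simp)
  have hg2 : (X 0 * X 4 + (X 2 * X 3 + X 4 * X 5) * X 1 : R) ∈ J := Ideal.subset_span (by simp)
  have hg3 : (X 0 * X 1 + X 2 * X 4 + (X 2 * X 3 + X 4 * X 5) * X 6 : R) ∈ J :=
    Ideal.subset_span (by simp)
  apply le_antisymm
  · -- √I ≤ √J : chase memberships in √J
    rw [Ideal.radical_le_radical_iff]
    have q1 : ((X 2 * X 3 + X 4 * X 5) * X 4 : R) ∈ J.radical := Ideal.le_radical hg1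
    have q2 : (X 0 * X 4 + (X 2 * X 3 + X 4 * X 5) * X 1 : R) ∈ J.radical := Ideal.le_radical hg2
    have q3 : (X 0 * X 1 + X 2 * X 4 + (X 2 * X 3 + X 4 * X 5) * X 6 : R) ∈ J.radical :=
      Ideal.le_radical hg3
    -- x1 x5 ∈ √J
    have h04 : (X 0 * X 4 : R) ∈ J.radical := by
      apply Ideal.mem_radical_of_pow_mem (m := 2)
      have : ((X 0 * X 4 : R)) ^ 2 =
          X 0 * (X 4 * (X 0 * X 4 + (X 2 * X 3 + X 4 * X 5) * X 1)
            - X 1 * ((X 2 * X 3 + X 4 * X 5) * X 4)) := by ring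
      rw [this]
      exact Ideal.le_radical (Ideal.mul_mem_left _ _
        (Ideal.sub_mem _ (Ideal.mul_mem_left _ _ hg2) (Ideal.mul_mem_left _ _ hg1)))
    -- g x2 ∈ √J
    have hg2' : ((X 2 * X 3 + X 4 * X 5) * X 1 : R) ∈ J.radical := by
      have : ((X 2 * X 3 + X 4 * X 5) * X 1 : R) =
          (X 0 * X 4 + (X 2 * X 3 + X 4 * X 5) * X 1) - X 0 * X 4 := by ring
      rw [this]; exact Ideal.sub_mem _ q2 h04
    -- x3 x5 ∈ √J
    have h24 : (X 2 * X 4 : R) ∈ J.radical := by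
      apply Ideal.mem_radical_of_pow_mem (m := 2)
      have : ((X 2 * X 4 : R)) ^ 2 =
          X 2 * X 4 * (X 0 * X 1 + X 2 * X 4 + (X 2 * X 3 + X 4 * X 5) * X 6)
            - X 1 * X 2 * (X 0 * X 4)
            - X 2 * X 6 * ((X 2 * X 3 + X 4 * X 5) * X 4) := by ring
      rw [this]
      exact Ideal.sub_mem _ (Ideal.sub_mem _ (Ideal.mul_mem_left _ _ q3)
        (Ideal.mul_mem_left _ _ h04)) (Ideal.mul_mem_left _ _ q1)
    -- x1 x2 ∈ √J
    have h01 : (X 0 * X 1 : R) ∈ J.radical := by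
      apply Ideal.mem_radical_of_pow_mem (m := 2)
      have : ((X 0 * X 1 : R)) ^ 2 =
          X 0 * X 1 * (X 0 * X 1 + X 2 * X 4 + (X 2 * X 3 + X 4 * X 5) * X 6)
            - X 0 * X 1 * (X 2 * X 4)
            - X 0 * X 6 * ((X 2 * X 3 + X 4 * X 5) * X 1) := by ring
      rw [this]
      exact Ideal.sub_mem _ (Ideal.sub_mem _ (Ideal.mul_mem_left _ _ q3)
        (Ideal.mul_mem_left _ _ h24)) (Ideal.mul_mem_left _ _ hg2')
    -- g x7 ∈ √J
    have hg7 : ((X 2 * X 3 + X 4 * X 5) * X 6 : R) ∈ J.radical := by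
      have : ((X 2 * X 3 + X 4 * X 5) * X 6 : R) =
          (X 0 * X 1 + X 2 * X 4 + (X 2 * X 3 + X 4 * X 5) * X 6)
            - X 0 * X 1 - X 2 * X 4 := by ring
      rw [this]; exact Ideal.sub_mem _ (Ideal.sub_mem _ q3 h01) h24
    -- x5 x6 ∈ √J
    have h45 : (X 4 * X 5 : R) ∈ J.radical := by
      apply Ideal.mem_radical_of_pow_mem (m := 2)
      have : ((X 4 * X 5 : R)) ^ 2 =
          X 5 * ((X 2 * X 3 + X 4 * X 5) * X 4) - X 3 * X 5 * (X 2 * X 4) := by ring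
      rw [this]
      exact Ideal.sub_mem _ (Ideal.mul_mem_left _ _ q1) (Ideal.mul_mem_left _ _ h24)
    -- x3 x4 x7 ∈ √J
    have h236 : (X 2 * X 3 * X 6 : R) ∈ J.radical := by
      have : (X 2 * X 3 * X 6 : R) =
          (X 2 * X 3 + X 4 * X 5) * X 6 - X 6 * (X 4 * X 5) := by ring
      rw [this]; exact Ideal.sub_mem _ hg7 (Ideal.mul_mem_left _ _ h45)
    -- x2 x3 x4 ∈ √J
    have h123 : (X 1 * X 2 * X 3 : R) ∈ J.radical := by
      have : (X 1 * X 2 * X 3 : R) =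
          (X 2 * X 3 + X 4 * X 5) * X 1 - X 1 * (X 4 * X 5) := by ring
      rw [this]; exact Ideal.sub_mem _ hg2' (Ideal.mul_mem_left _ _ h45)
    rw [hI, Ideal.span_le]
    intro p hp
    simp only [Set.mem_insert_iff, Set.mem_singleton_iff] at hp
    rcases hp with rfl | rfl | rfl | rfl | rfl | rfl
    exacts [h01, h04, h24, h45, h236, h123]
  · -- √J ≤ √I since J ≤ I
    apply Ideal.radical_mono
    rw [hJ, Ideal.span_le]
    intro p hp
    simp only [Set.mem_insert_iff, Set.mem_singleton_iff] at hp
    rcases hp with rfl | rfl | rfl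
    · have : ((X 2 * X 3 + X 4 * X 5) * X 4 : R) =
          X 3 * (X 2 * X 4) + X 4 * (X 4 * X 5) := by ring
      rw [this]
      exact Ideal.add_mem _ (Ideal.mul_mem_left _ _ hc) (Ideal.mul_mem_left _ _ hd)
    · have : (X 0 * X 4 + (X 2 * X 3 + X 4 * X 5) * X 1 : R) =
          X 0 * X 4 + X 1 * X 2 * X 3 + X 1 * (X 4 * X 5) := by ring
      rw [this]
      exact Ideal.add_mem _ (Ideal.add_mem _ hb hf) (Ideal.mul_mem_left _ _ hd)
    · have : (X 0 * X 1 + X 2 * X 4 + (X 2 * X 3 + X 4 * X 5) * X 6 : R) =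
          X 0 * X 1 + X 2 * X 4 + X 2 * X 3 * X 6 + X 6 * (X 4 * X 5) := by ring
      rw [this]
      exact Ideal.add_mem _ (Ideal.add_mem _ (Ideal.add_mem _ ha hc) he)
        (Ideal.mul_mem_left _ _ hd)
end

section
/- In the polynomial ring $R=K[x_1,\dots,x_7]$ over a field $K$, the ideal $I=(x_1x_2,\,x_1x_5,\,x_3x_5,\,x_5x_6,\,x_3x_4x_7,\,x_2x_3x_4)$ equals the intersection $(x_1,x_3,x_5)\cap(x_2,x_4,x_5)\cap(x_1,x_4,x_5)\cap(x_2,x_3,x_5)\cap(x_1,x_3,x_6)\cap(x_2,x_5,x_7)$. -/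
open MvPolynomial

lemma pair_single_le {σ : Type*} [DecidableEq σ] {i j : σ} (h : i ≠ j) (m : σ →₀ ℕ) :
    Finsupp.single i 1 + Finsupp.single j 1 ≤ m ↔ m i ≠ 0 ∧ m j ≠ 0 := by
  constructor
  · intro H
    exact ⟨Nat.one_le_iff_ne_zero.mp (Finsupp.single_le_iff.mp (le_trans le_self_add H)),
      Nat.one_le_iff_ne_zero.mp (Finsupp.single_le_iff.mp (le_trans le_add_self H))⟩
  · rintro ⟨hi, hj⟩
    rw [Finsupp.le_def]
    intro k
    rcases eq_or_ne i k with h1 | h1 <;> rcases eq_or_ne j k with h2 | h2 <;>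
      simp_all [Finsupp.single_apply] <;> omega

lemma triple_single_le {σ : Type*} [DecidableEq σ] {i j k : σ} (hij : i ≠ j) (hik : i ≠ k)
    (hjk : j ≠ k) (m : σ →₀ ℕ) :
    Finsupp.single i 1 + Finsupp.single j 1 + Finsupp.single k 1 ≤ m ↔
      m i ≠ 0 ∧ m j ≠ 0 ∧ m k ≠ 0 := by
  constructor
  · intro H
    refine ⟨?_, ?_, ?_⟩ <;> refine Nat.one_le_iff_ne_zero.mp (Finsupp.single_le_iff.mp ?_)
    · exact le_trans (le_trans le_self_add le_self_add) H
    · exact le_trans (le_trans le_add_self le_self_add) H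
    · exact le_trans le_add_self H
  · rintro ⟨hi, hj, hk⟩
    rw [Finsupp.le_def]
    intro l
    rcases eq_or_ne i l with h1 | h1 <;> rcases eq_or_ne j l with h2 | h2 <;>
      rcases eq_or_ne k l with h3 | h3 <;> simp_all [Finsupp.single_apply] <;> omega

lemma X_mul_X' {σ R : Type*} [CommSemiring R] (i j : σ) :
    (X i * X j : MvPolynomial σ R) = monomial (Finsupp.single i 1 + Finsupp.single j 1) 1 := by
  rw [X, X, monomial_mul, one_mul]

lemma monomial_mul_X' {σ R : Type*} [CommSemiring R] (s : σ →₀ ℕ) (k : σ) :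
    (monomial s (1 : R)) * X k = monomial (s + Finsupp.single k 1) 1 := by
  rw [X, monomial_mul, one_mul]

/-- In `K[x₁,…,x₇]` (with `X 0, …, X 6` standing for `x₁, …, x₇`),
`(x₁x₂, x₁x₅, x₃x₅, x₅x₆, x₃x₄x₇, x₂x₃x₄)
  = (x₁,x₃,x₅) ∩ (x₂,x₄,x₅) ∩ (x₁,x₄,x₅) ∩ (x₂,x₃,x₅) ∩ (x₁,x₃,x₆) ∩ (x₂,x₅,x₇)`. -/
theorem stmt_7 (K : Type*) [Field K] :
    (Ideal.span {X 0 * X 1, X 0 * X 4, X 2 * X 4, X 4 * X 5,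
        X 2 * X 3 * X 6, X 1 * X 2 * X 3} : Ideal (MvPolynomial (Fin 7) K)) =
      Ideal.span {X 0, X 2, X 4} ⊓ Ideal.span {X 1, X 3, X 4} ⊓
      Ideal.span {X 0, X 3, X 4} ⊓ Ideal.span {X 1, X 2, X 4} ⊓
      Ideal.span {X 0, X 2, X 5} ⊓ Ideal.span {X 1, X 4, X 6} := by
  have hset : ({X 0 * X 1, X 0 * X 4, X 2 * X 4, X 4 * X 5,
        X 2 * X 3 * X 6, X 1 * X 2 * X 3} : Set (MvPolynomial (Fin 7) K)) =
      (fun s => monomial s (1 : K)) ''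
        {Finsupp.single 0 1 + Finsupp.single 1 1,
         Finsupp.single 0 1 + Finsupp.single 4 1,
         Finsupp.single 2 1 + Finsupp.single 4 1,
         Finsupp.single 4 1 + Finsupp.single 5 1,
         Finsupp.single 2 1 + Finsupp.single 3 1 + Finsupp.single 6 1,
         Finsupp.single 1 1 + Finsupp.single 2 1 + Finsupp.single 3 1} := by
    simp only [Set.image_insert_eq, Set.image_singleton, X_mul_X', monomial_mul_X']
  have hX : ∀ (a b c : Fin 7), ({X a, X b, X c} : Set (MvPolynomial (Fin 7) K)) =
      MvPolynomial.X '' {a, b, c} := by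
    intro a b c
    simp [Set.image_insert_eq]
  ext f
  rw [hset, Ideal.mem_inf, Ideal.mem_inf, Ideal.mem_inf, Ideal.mem_inf, Ideal.mem_inf,
    hX 0 2 4, hX 1 3 4, hX 0 3 4, hX 1 2 4, hX 0 2 5, hX 1 4 6,
    mem_ideal_span_monomial_image,
    mem_ideal_span_X_image, mem_ideal_span_X_image, mem_ideal_span_X_image,
    mem_ideal_span_X_image, mem_ideal_span_X_image, mem_ideal_span_X_image]
  simp only [Set.mem_insert_iff, Set.mem_singleton_iff, exists_eq_or_imp, exists_eq_left,
    ← forall_and, ← imp_and]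
  apply forall_congr'
  intro m
  apply imp_congr_right
  intro _
  rw [pair_single_le (by decide), pair_single_le (by decide), pair_single_le (by decide),
    pair_single_le (by decide),
    triple_single_le (by decide) (by decide) (by decide),
    triple_single_le (by decide) (by decide) (by decide)]
  itauto
end

section
/- In the polynomial ring $R=K[x_1,\dots,x_6]$ over a field $K$, let $I=(x_1x_4,\,x_1x_5,\,x_1x_6,\,x_2x_5,\,x_2x_6,\,x_3x_5,\,x_3x_6)$. Then $\sqrt{I}=\sqrt{(\gamma_1,\gamma_2,\gamma_3,\gamma_4)}$, where $\gamma_1=x_1x_5$, $\gamma_2=x_2x_5+x_1x_6$, $\gamma_3=x_1x_4+x_3x_5+x_2x_6$, $\gamma_4=x_3x_6$. -/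
open MvPolynomial

set_option maxHeartbeats 2000000 in
/-- **Example 2.** In `K[x₁,…,x₆]` (with `X 0, …, X 5` standing for `x₁, …, x₆`), the ideal
`I = (x₁x₄, x₁x₅, x₁x₆, x₂x₅, x₂x₆, x₃x₅, x₃x₆)` satisfies `√I = √(γ₁,γ₂,γ₃,γ₄)` where
`γ₁ = x₁x₅`, `γ₂ = x₂x₅ + x₁x₆`, `γ₃ = x₁x₄ + x₃x₅ + x₂x₆`, `γ₄ = x₃x₆`. -/
theorem stmt_8 (K : Type*) [Field K] :
    (Ideal.span {X 0 * X 3, X 0 * X 4, X 0 * X 5, X 1 * X 4, X 1 * X 5,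
        X 2 * X 4, X 2 * X 5} : Ideal (MvPolynomial (Fin 6) K)).radical =
      (Ideal.span {X 0 * X 4, X 1 * X 4 + X 0 * X 5,
        X 0 * X 3 + X 2 * X 4 + X 1 * X 5, X 2 * X 5}).radical := by
  set R := MvPolynomial (Fin 6) K
  set I : Ideal R := Ideal.span {X 0 * X 3, X 0 * X 4, X 0 * X 5, X 1 * X 4, X 1 * X 5,
      X 2 * X 4, X 2 * X 5} with hI
  set J : Ideal R := Ideal.span {X 0 * X 4, X 1 * X 4 + X 0 * X 5,
      X 0 * X 3 + X 2 * X 4 + X 1 * X 5, X 2 * X 5} with hJ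
  have hb : (X 0 * X 4 : R) ∈ J := Ideal.subset_span (by simp)
  have hdc : (X 1 * X 4 + X 0 * X 5 : R) ∈ J := Ideal.subset_span (by simp)
  have haef : (X 0 * X 3 + X 2 * X 4 + X 1 * X 5 : R) ∈ J := Ideal.subset_span (by simp)
  have hg : (X 2 * X 5 : R) ∈ J := Ideal.subset_span (by simp)
  have ha' : (X 0 * X 3 : R) ∈ I := Ideal.subset_span (by simp)
  have hb' : (X 0 * X 4 : R) ∈ I := Ideal.subset_span (by simp)
  have hc' : (X 0 * X 5 : R) ∈ I := Ideal.subset_span (by simp)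
  have hd' : (X 1 * X 4 : R) ∈ I := Ideal.subset_span (by simp)
  have he' : (X 1 * X 5 : R) ∈ I := Ideal.subset_span (by simp)
  have hf' : (X 2 * X 4 : R) ∈ I := Ideal.subset_span (by simp)
  have hg' : (X 2 * X 5 : R) ∈ I := Ideal.subset_span (by simp)
  apply le_antisymm
  · rw [Ideal.radical_le_radical_iff, hI, Ideal.span_le]
    intro p hp
    simp only [Set.mem_insert_iff, Set.mem_singleton_iff] at hp
    rcases hp with h | h | h | h | h | h | h <;> subst h
    · -- a = X0X3, power 4
      refine ⟨4, ?_⟩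
      have : (X 0 * X 3 : R) ^ 4 =
          ((X 0 * X 3) ^ 2 - (X 0 * X 3) * (X 1 * X 5)) *
            ((X 0 * X 3) * (X 0 * X 3 + X 2 * X 4 + X 1 * X 5) - (X 2 * X 3) * (X 0 * X 4))
          + ((X 1 * X 3) ^ 2) *
            ((X 0 * X 5) * (X 1 * X 4 + X 0 * X 5) - (X 1 * X 5) * (X 0 * X 4)) := by ring
      rw [this]
      exact Ideal.add_mem _
        (Ideal.mul_mem_left _ _ (Ideal.sub_mem _ (Ideal.mul_mem_left _ _ haef)
          (Ideal.mul_mem_left _ _ hb)))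
        (Ideal.mul_mem_left _ _ (Ideal.sub_mem _ (Ideal.mul_mem_left _ _ hdc)
          (Ideal.mul_mem_left _ _ hb)))
    · exact ⟨1, by rwa [pow_one]⟩
    · -- c = X0X5, power 2
      refine ⟨2, ?_⟩
      have : (X 0 * X 5 : R) ^ 2 =
          (X 0 * X 5) * (X 1 * X 4 + X 0 * X 5) - (X 1 * X 5) * (X 0 * X 4) := by ring
      rw [this]
      exact Ideal.sub_mem _ (Ideal.mul_mem_left _ _ hdc) (Ideal.mul_mem_left _ _ hb)
    · -- d = X1X4, power 2
      refine ⟨2, ?_⟩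
      have : (X 1 * X 4 : R) ^ 2 =
          (X 1 * X 4) * (X 1 * X 4 + X 0 * X 5) - (X 1 * X 5) * (X 0 * X 4) := by ring
      rw [this]
      exact Ideal.sub_mem _ (Ideal.mul_mem_left _ _ hdc) (Ideal.mul_mem_left _ _ hb)
    · -- e = X1X5, power 4
      refine ⟨4, ?_⟩
      have : (X 1 * X 5 : R) ^ 4 =
          ((X 1 * X 5) ^ 2 - (X 0 * X 3) * (X 1 * X 5)) *
            ((X 1 * X 5) * (X 0 * X 3 + X 2 * X 4 + X 1 * X 5) - (X 1 * X 4) * (X 2 * X 5))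
          + ((X 1 * X 3) ^ 2) *
            ((X 0 * X 5) * (X 1 * X 4 + X 0 * X 5) - (X 1 * X 5) * (X 0 * X 4)) := by ring
      rw [this]
      exact Ideal.add_mem _
        (Ideal.mul_mem_left _ _ (Ideal.sub_mem _ (Ideal.mul_mem_left _ _ haef)
          (Ideal.mul_mem_left _ _ hg)))
        (Ideal.mul_mem_left _ _ (Ideal.sub_mem _ (Ideal.mul_mem_left _ _ hdc)
          (Ideal.mul_mem_left _ _ hb)))
    · -- f = X2X4, power 2
      refine ⟨2, ?_⟩
      have : (X 2 * X 4 : R) ^ 2 =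
          (X 2 * X 4) * (X 0 * X 3 + X 2 * X 4 + X 1 * X 5) - (X 2 * X 3) * (X 0 * X 4)
            - (X 1 * X 4) * (X 2 * X 5) := by ring
      rw [this]
      exact Ideal.sub_mem _ (Ideal.sub_mem _ (Ideal.mul_mem_left _ _ haef)
        (Ideal.mul_mem_left _ _ hb)) (Ideal.mul_mem_left _ _ hg)
    · exact ⟨1, by rwa [pow_one]⟩
  · rw [Ideal.radical_le_radical_iff, hJ, Ideal.span_le]
    intro p hp
    simp only [Set.mem_insert_iff, Set.mem_singleton_iff] at hp
    rcases hp with h | h | h | h <;> subst h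
    · exact Ideal.le_radical hb'
    · exact Ideal.le_radical (Ideal.add_mem _ hd' hc')
    · exact Ideal.le_radical (Ideal.add_mem _ (Ideal.add_mem _ ha' hf') he')
    · exact Ideal.le_radical hg'
end

section
/- Let $R$ be a commutative Noetherian ring, and let $h\le t$ be nonnegative integers, $0=a_0<a_1<\cdots<a_h\le t$ integers, and $x_1,\dots,x_t,y_1,\dots,y_{a_h}\in R$. Consider $I_0=(x_1,\dots,x_t)$ and, for $1\le i\le h$, $I_i=(y_1,\dots,y_{a_i},x_{a_i+1},\dots,x_t)$. Then there exist $\gamma_1,\dots,\gamma_{t+a_h-h}\in R$ generating $I_0\cap I_1\cap\cdots\cap I_h$ up to radical such that $(\gamma_1,\dots,\gamma_i)\subseteq(y_1,\dots,y_i)$ for all $1\le i\le a_h$, and $\gamma_i=x_{i-a_h+h}$ for all $2a_h-h+1\le i\le t+a_h-h$. -/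
/-- **Proposition** (Barile). Let `h ≤ t`, `0 = a 0 < a 1 < ⋯ < a h ≤ t`, and
`x 1, …, x t, y 1, …, y (a h) ∈ R`. With `I i = (y 1, …, y (a i), x (a i + 1), …, x t)`
(so `I 0 = (x 1, …, x t)`), there exist `γ 1, …, γ (t + a h - h)` generating
`I 0 ∩ I 1 ∩ ⋯ ∩ I h` up to radical such that `(γ 1, …, γ i) ⊆ (y 1, …, y i)` for all
`1 ≤ i ≤ a h`, and `γ i = x (i - a h + h)` for all `2 a h - h + 1 ≤ i ≤ t + a h - h`. -/
theorem stmt_10 {R : Type*} [CommRing R] [IsNoetherianRing R]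
    (h t : ℕ) (hht : h ≤ t) (a : ℕ → ℕ) (ha0 : a 0 = 0)
    (hmono : ∀ i, i < h → a i < a (i + 1)) (hat : a h ≤ t)
    (x y : ℕ → R) (I : ℕ → Ideal R)
    (hI : ∀ i, i ≤ h →
      I i = Ideal.span (y '' Set.Icc 1 (a i) ∪ x '' Set.Icc (a i + 1) t)) :
    ∃ γ : ℕ → R,
      (⨅ i ∈ Finset.Iic h, I i).radical =
        (Ideal.span (γ '' Set.Icc 1 (t + a h - h))).radical ∧
      (∀ i, 1 ≤ i → i ≤ a h →
        Ideal.span (γ '' Set.Icc 1 i) ≤ Ideal.span (y '' Set.Icc 1 i)) ∧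
      (∀ i, 2 * a h - h + 1 ≤ i → i ≤ t + a h - h → γ i = x (i + h - a h)) := by
  classical
  set m := a h with hm
  -- basic monotonicity facts
  have hastep : ∀ j, j ≤ h → ∀ i, i ≤ j → a i + (j - i) ≤ a j := by
    intro j
    induction j with
    | zero =>
      intro hj i hi
      obtain rfl : i = 0 := by omega
      omega
    | succ n IH =>
      intro hj i hi
      rcases Nat.eq_or_lt_of_le hi with he | hlt
      · subst he; omega
      · have h1 := IH (by omega) i (by omega)
        have h2 := hmono n (by omega)
        omega
  have hmono' : ∀ i j, i ≤ j → j ≤ h → a i ≤ a j := by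
    intro i j hij hjh; have := hastep j hjh i hij; omega
  have hmh : h ≤ m := by have := hastep h le_rfl 0 (Nat.zero_le h); omega
  -- the block function
  have hs_le_h : ∀ l, 1 ≤ l → l ≤ m → sInf {i | l ≤ a i} ≤ h := by
    intro l _ hlm
    have hmem : h ∈ {i | l ≤ a i} := by
      simp only [Set.mem_setOf_eq]; omega
    exact Nat.sInf_le hmem
  have hs_mem : ∀ l, 1 ≤ l → l ≤ m → l ≤ a (sInf {i | l ≤ a i}) := by
    intro l _ hlm
    have hne : {i | l ≤ a i}.Nonempty := ⟨h, by simp only [Set.mem_setOf_eq]; omega⟩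
    exact Nat.sInf_mem hne
  have hs_pos : ∀ l, 1 ≤ l → l ≤ m → 1 ≤ sInf {i | l ≤ a i} := by
    intro l hl hlm
    by_contra hc
    push_neg at hc
    have h1 := hs_mem l hl hlm
    have h0 : sInf {i | l ≤ a i} = 0 := by omega
    rw [h0, ha0] at h1; omega
  have hs_pred : ∀ l, 1 ≤ l → l ≤ m → a (sInf {i | l ≤ a i} - 1) < l := by
    intro l hl hlm
    have hpos := hs_pos l hl hlm
    have := Nat.notMem_of_lt_sInf
      (show sInf {i | l ≤ a i} - 1 < sInf {i | l ≤ a i} by omega)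
    simp only [Set.mem_setOf_eq] at this
    omega
  have hL1 : ∀ l, 1 ≤ l → l ≤ m → a (sInf {i | l ≤ a i}) + h ≤ l + m := by
    intro l hl hlm
    have h1 := hs_le_h l hl hlm
    have h2 := hs_pos l hl hlm
    have h3 := hs_pred l hl hlm
    have h4 := hastep h le_rfl (sInf {i | l ≤ a i}) h1
    have h5 := hastep (sInf {i | l ≤ a i} - 1) (by omega) 0 (by omega)
    omega
  have hexists : ∀ (P : ℕ → Prop), P 0 → ∀ n, ∃ A, A ≤ n ∧ P A ∧
      ∀ s, A < s → s ≤ n → ¬ P s := by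
    intro P hP0 n
    induction n with
    | zero => exact ⟨0, le_rfl, hP0, fun s hs1 hs2 => absurd hs2 (by omega)⟩
    | succ n IH =>
      obtain ⟨A, hA1, hA2, hA3⟩ := IH
      by_cases hPn : P (n + 1)
      · exact ⟨n + 1, le_rfl, hPn, fun s hs1 hs2 => absurd hs2 (by omega)⟩
      · refine ⟨A, by omega, hA2, fun s hs1 hs2 => ?_⟩
        rcases Nat.eq_or_lt_of_le hs2 with he | hlt
        · rw [he]; exact hPn
        · exact hA3 s hs1 (by omega)
  -- the construction
  let γ : ℕ → R := fun j =>
    if 2 * m + 1 ≤ j + h then x (j + h - m)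
    else ∑ l ∈ Finset.Icc 1 m,
      if m + 1 ≤ l + j ∧ l + j ≤ m + a (sInf {i | l ≤ a i})
        then y (l + j - m) * x l else 0
  have hγ_tail : ∀ j, 2 * m + 1 ≤ j + h → γ j = x (j + h - m) := by
    intro j hj
    show (if 2 * m + 1 ≤ j + h then x (j + h - m) else _) = _
    rw [if_pos hj]
  have hγ_sum : ∀ j, ¬ (2 * m + 1 ≤ j + h) →
      γ j = ∑ l ∈ Finset.Icc 1 m,
        if m + 1 ≤ l + j ∧ l + j ≤ m + a (sInf {i | l ≤ a i})
          then y (l + j - m) * x l else 0 := by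
    intro j hj
    show (if 2 * m + 1 ≤ j + h then x (j + h - m) else _) = _
    rw [if_neg hj]
  -- Schmitt–Vogel style induction: all staircase products lie in the radical
  have key : ∀ j k l, 1 ≤ k → 1 ≤ l → l ≤ m → k ≤ a (sInf {i | l ≤ a i}) →
      k + m = l + j →
      y k * x l ∈ (Ideal.span (γ '' Set.Icc 1 (t + m - h))).radical := by
    intro j
    induction j using Nat.strong_induction_on with
    | _ j IH =>
      intro k l hk hl hlm hkb hkj
      have hLl := hL1 l hl hlm
      have hj1 : 1 ≤ j := by omega
      have hjh : ¬ (2 * m + 1 ≤ j + h) := by omega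
      have hsum := hγ_sum j hjh
      have hjmem : γ j ∈ Ideal.span (γ '' Set.Icc 1 (t + m - h)) :=
        Ideal.subset_span ⟨j, ⟨hj1, by omega⟩, rfl⟩
      have hlmem : l ∈ Finset.Icc 1 m := Finset.mem_Icc.mpr ⟨hl, hlm⟩
      have hexp : y k * x l * γ j = y k * x l * (y k * x l) +
          ∑ l' ∈ (Finset.Icc 1 m).erase l,
            (y k * x l * (if m + 1 ≤ l' + j ∧ l' + j ≤ m + a (sInf {i | l' ≤ a i})
              then y (l' + j - m) * x l' else 0)) := by
        rw [hsum, Finset.mul_sum, ← Finset.add_sum_erase _ _ hlmem,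
          if_pos ⟨show m + 1 ≤ l + j by omega, show l + j ≤ m + a (sInf {i | l ≤ a i}) by omega⟩,
          show l + j - m = k by omega]
      have hS : ∑ l' ∈ (Finset.Icc 1 m).erase l,
          (y k * x l * (if m + 1 ≤ l' + j ∧ l' + j ≤ m + a (sInf {i | l' ≤ a i})
            then y (l' + j - m) * x l' else 0)) ∈
          (Ideal.span (γ '' Set.Icc 1 (t + m - h))).radical := by
        apply Ideal.sum_mem
        intro l' hl'
        have hl'ne : l' ≠ l := Finset.ne_of_mem_erase hl'
        have hl'mem := Finset.mem_of_mem_erase hl'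
        rw [Finset.mem_Icc] at hl'mem
        split_ifs with hc
        · rcases Nat.lt_or_ge l l' with hll | hll
          · -- l < l' : use y k * x l' which lives on a lower level
            have hIH := IH (k + m - l') (by omega) k l' hk hl'mem.1 hl'mem.2
              (by omega) (by omega)
            have heq : y k * x l * (y (l' + j - m) * x l') =
                y (l' + j - m) * x l * (y k * x l') := by ring
            rw [heq]
            exact Ideal.mul_mem_left _ _ hIH
          · have hll' : l' < l := by omega
            have hIH := IH ((l' + j - m) + m - l) (by omega) (l' + j - m) l
              (by omega) hl hlm (by omega) (by omega)
            have heq : y k * x l * (y (l' + j - m) * x l') =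
                y k * x l' * (y (l' + j - m) * x l) := by ring
            rw [heq]
            exact Ideal.mul_mem_left _ _ hIH
        · rw [mul_zero]
          exact Ideal.zero_mem _
      have h3 : (y k * x l) ^ 2 = y k * x l * γ j -
          ∑ l' ∈ (Finset.Icc 1 m).erase l,
            (y k * x l * (if m + 1 ≤ l' + j ∧ l' + j ≤ m + a (sInf {i | l' ≤ a i})
              then y (l' + j - m) * x l' else 0)) := by
        rw [hexp]; ring
      have hsq : (y k * x l) ^ 2 ∈
          (Ideal.span (γ '' Set.Icc 1 (t + m - h))).radical := by
        rw [h3]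
        exact Ideal.sub_mem _ (Ideal.le_radical (Ideal.mul_mem_left _ _ hjmem)) hS
      exact Ideal.mem_radical_of_pow_mem hsq
  refine ⟨γ, ?_, ?_, ?_⟩
  · -- radical equality
    have hspanle : Ideal.span (γ '' Set.Icc 1 (t + m - h)) ≤ ⨅ i ∈ Finset.Iic h, I i := by
      rw [Ideal.span_le]
      rintro g ⟨j, ⟨hj1, hj2⟩, rfl⟩
      simp only [SetLike.mem_coe, Ideal.mem_iInf]
      intro i hi
      rw [Finset.mem_Iic] at hi
      have hai : a i ≤ m := hmono' i h hi le_rfl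
      rw [hI i hi]
      by_cases hcase : 2 * m + 1 ≤ j + h
      · rw [hγ_tail j hcase]
        apply Ideal.subset_span
        right
        exact ⟨j + h - m, ⟨by omega, by omega⟩, rfl⟩
      · rw [hγ_sum j hcase]
        apply Ideal.sum_mem
        intro l hl
        rw [Finset.mem_Icc] at hl
        split_ifs with hc
        · rcases Nat.lt_or_ge (a i) (l + j - m) with hgt | hle2
          · -- the x part : a i < k ≤ a (s l) forces a i < l
            have hsl := hs_mem l hl.1 hl.2
            have hpred := hs_pred l hl.1 hl.2
            have hpos := hs_pos l hl.1 hl.2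
            have hslh := hs_le_h l hl.1 hl.2
            have hisl : i < sInf {i | l ≤ a i} := by
              by_contra hcc
              push_neg at hcc
              have := hmono' _ _ hcc hi
              omega
            have hail : a i < l := by
              have := hmono' i (sInf {i | l ≤ a i} - 1) (by omega) (by omega)
              omega
            exact Ideal.mul_mem_left _ _
              (Ideal.subset_span (Or.inr ⟨l, ⟨by omega, by omega⟩, rfl⟩))
          · -- the y part : k ≤ a i
            exact Ideal.mul_mem_right _ _
              (Ideal.subset_span (Or.inl ⟨l + j - m, ⟨by omega, by omega⟩, rfl⟩))
        · exact Ideal.zero_mem _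
    refine le_antisymm ?_ (Ideal.radical_mono hspanle)
    have hinf_le : (⨅ i ∈ Finset.Iic h, I i) ≤
        (Ideal.span (γ '' Set.Icc 1 (t + m - h))).radical := by
      rw [Ideal.radical_eq_sInf]
      refine le_sInf ?_
      rintro p ⟨hsub, hp⟩
      have hradp : (Ideal.span (γ '' Set.Icc 1 (t + m - h))).radical ≤ p := by
        have h1 : (Ideal.span (γ '' Set.Icc 1 (t + m - h))).radical ≤ p.radical :=
          Ideal.radical_mono hsub
        rwa [hp.radical] at h1
      have hP0 : ∀ k, 1 ≤ k → k ≤ a 0 → y k ∈ p := by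
        intro k h1 h2; rw [ha0] at h2; exact absurd h2 (by omega)
      obtain ⟨A, hAh, hPA, hAgr⟩ :=
        hexists (fun i => ∀ k, 1 ≤ k → k ≤ a i → y k ∈ p) hP0 h
      have hIA : I A ≤ p := by
        rw [hI A hAh, Ideal.span_le]
        rintro g (⟨k, hk, rfl⟩ | ⟨l, hl, rfl⟩)
        · rw [Set.mem_Icc] at hk
          exact hPA k hk.1 hk.2
        · rw [Set.mem_Icc] at hl
          rcases Nat.lt_or_ge m l with hgt | hle
          · -- tail variable
            have h1 : γ (l + m - h) = x l := by
              rw [hγ_tail _ (by omega)]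
              congr 1
              omega
            exact hsub (Ideal.subset_span ⟨l + m - h, ⟨by omega, by omega⟩, h1⟩)
          · have hl1 : 1 ≤ l := by omega
            have hsl := hs_mem l hl1 hle
            have hslh := hs_le_h l hl1 hle
            have hApos : A < sInf {i | l ≤ a i} := by
              by_contra hcc
              push_neg at hcc
              have := hmono' _ _ hcc hAh
              omega
            have hnP := hAgr (sInf {i | l ≤ a i}) hApos hslh
            obtain ⟨k, hk1, hk2, hknp⟩ :
                ∃ k, 1 ≤ k ∧ k ≤ a (sInf {i | l ≤ a i}) ∧ y k ∉ p := by
              by_contra hcon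
              push_neg at hcon
              exact hnP fun k hk1 hk2 => hcon k hk1 hk2
            have hyx := key (k + m - l) k l hk1 hl1 hle hk2 (by omega)
            have hyxp : y k * x l ∈ p := hradp hyx
            rcases hp.mem_or_mem hyxp with h' | h'
            · exact absurd h' hknp
            · exact h'
      have hAmem : A ∈ Finset.Iic h := Finset.mem_Iic.mpr hAh
      exact le_trans (biInf_le I hAmem) hIA
    calc (⨅ i ∈ Finset.Iic h, I i).radical
        ≤ ((Ideal.span (γ '' Set.Icc 1 (t + m - h))).radical).radical :=
          Ideal.radical_mono hinf_le
      _ = _ := Ideal.radical_idem _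
  · -- triangular condition
    intro i hi1 him
    rw [Ideal.span_le]
    rintro g ⟨j, ⟨hj1, hji⟩, rfl⟩
    have hjh : ¬ (2 * m + 1 ≤ j + h) := by omega
    rw [hγ_sum j hjh]
    simp only [SetLike.mem_coe]
    apply Ideal.sum_mem
    intro l hl
    rw [Finset.mem_Icc] at hl
    split_ifs with hc
    · rw [show y (l + j - m) * x l = x l * y (l + j - m) from mul_comm _ _]
      exact Ideal.mul_mem_left _ _
        (Ideal.subset_span ⟨l + j - m, ⟨by omega, by omega⟩, rfl⟩)
    · exact Ideal.zero_mem _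
  · -- tail condition
    intro i h1 h2
    rw [hγ_tail i (by omega)]
end

section
/- Let $K$ be a field and $R=K[x_1,\dots,x_t,y_1,\dots,y_t]$. Then there exist $t$ elements $\gamma_1,\dots,\gamma_t\in R$ such that $\sqrt{(\gamma_1,\dots,\gamma_t)}=\sqrt{\bigcap_{i=0}^{t}(y_1,\dots,y_i,x_{i+1},\dots,x_t)}$. -/
/-!
The ideal `L` generated by the products `x_j y_k` with `k ≤ j` sits between the two sides.
Each generator of `L` lies in every `(y_1, …, y_i, x_{i+1}, …, x_t)`, and conversely a product
of one generator from each of these `t + 1` ideals contains some `x_j` from the `i`-th ideal next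
to some `y_k` from the `(i+1)`-st, so `k ≤ i ≤ j`; hence the intersection and `L` have the same
radical. For the elements `γ_d = ∑_k x_{k+d} y_k`, the diagonal sums of `L`, descending induction
on `d` shows that `x_{k+d} y_k` is nilpotent modulo `(γ)`: multiplying `γ_d` by `x_{k+d} y_k`
gives its square plus terms that each contain a product from a diagonal further out.
-/

open MvPolynomial

lemma Nat.exists_lt_and_not_succ_of_not {P : ℕ → Prop} {t : ℕ} (h0 : P 0) (ht : ¬ P t) :
    ∃ i < t, P i ∧ ¬ P (i + 1) := by
  induction t with
  | zero => exact absurd h0 ht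
  | succ n ih =>
    by_cases hn : P n
    · exact ⟨n, n.lt_succ_self, hn, ht⟩
    · obtain ⟨i, hi, h⟩ := ih hn
      exact ⟨i, by omega, h⟩

lemma Ideal.radical_finset_prod {R ι : Type*} [CommSemiring R] (s : Finset ι)
    (I : ι → Ideal R) :
    (∏ i ∈ s, I i).radical = (s.inf I).radical := by
  classical
  induction s using Finset.induction_on with
  | empty => simp
  | insert a s ha ih =>
    rw [Finset.prod_insert ha, Finset.inf_insert, Ideal.radical_mul, ih, Ideal.radical_inf]

def diagPairs (t d : ℕ) : Finset (Fin t × Fin t) :=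
  Finset.univ.filter fun p => (p.1 : ℕ) = p.2 + d

@[simp]
lemma mem_diagPairs {t d : ℕ} {p : Fin t × Fin t} :
    p ∈ diagPairs t d ↔ (p.1 : ℕ) = p.2 + d := by
  simp [diagPairs]

section Staircase

variable {R : Type*} [CommRing R] {t : ℕ} (x y : Fin t → R)

def diagSum (d : ℕ) : R :=
  ∑ p ∈ diagPairs t d, x p.1 * y p.2

def lowerProductIdeal : Ideal R :=
  Ideal.span {p | ∃ j k : Fin t, k ≤ j ∧ x j * y k = p}

def stairIdeal (i : ℕ) : Ideal R :=
  Ideal.span (y '' {j | (j : ℕ) < i} ∪ x '' {j | i ≤ (j : ℕ)})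

variable {x y}

lemma mul_mem_lowerProductIdeal {j k : Fin t} (h : k ≤ j) : x j * y k ∈ lowerProductIdeal x y :=
  Ideal.subset_span ⟨j, k, h, rfl⟩

variable (x y)

lemma diagSum_mem_lowerProductIdeal (d : ℕ) : diagSum x y d ∈ lowerProductIdeal x y :=
  Ideal.sum_mem _ fun p hp => mul_mem_lowerProductIdeal <| by
    rw [mem_diagPairs] at hp
    omega

lemma mul_mem_radical_span_diagSum {j k : Fin t} (hkj : k ≤ j) :
    x j * y k ∈ (Ideal.span (Set.range fun d : Fin t => diagSum x y d)).radical := by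
  set I := (Ideal.span (Set.range fun d : Fin t => diagSum x y d)).radical
  suffices H : ∀ d : ℕ, ∀ j k : Fin t, (j : ℕ) = k + d → x j * y k ∈ I from
    H (j - k) j k (by omega)
  refine Nat.strong_decreasing_induction ⟨t, fun d hd j k hjk => by omega⟩
    fun d ih j k hjk => ?_
  have hd : d < t := by omega
  have hγ : diagSum x y d ∈ I := Ideal.le_radical (Ideal.subset_span ⟨⟨d, hd⟩, rfl⟩)
  have hjk_mem : (j, k) ∈ diagPairs t d := mem_diagPairs.mpr hjk
  have hoff : ∀ p ∈ (diagPairs t d).erase (j, k), x j * y k * (x p.1 * y p.2) ∈ I := by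
    rintro ⟨j', k'⟩ hp
    simp only [Finset.mem_erase, mem_diagPairs, ne_eq, Prod.mk.injEq] at hp
    obtain ⟨hne, hj'⟩ := hp
    rcases lt_trichotomy k' k with hlt | rfl | hgt
    · have hfar := ih (j - k') (by omega) j k' (by omega)
      rw [show x j * y k * (x j' * y k') = x j' * y k * (x j * y k') by ring]
      exact Ideal.mul_mem_left _ _ hfar
    · exact absurd ⟨Fin.ext (by omega), rfl⟩ hne
    · have hfar := ih (j' - k) (by omega) j' k (by omega)
      rw [show x j * y k * (x j' * y k') = x j * y k' * (x j' * y k) by ring]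
      exact Ideal.mul_mem_left _ _ hfar
  have hsq := Ideal.sub_mem _ (Ideal.mul_mem_left I (x j * y k) hγ) (Ideal.sum_mem _ hoff)
  rw [diagSum, Finset.mul_sum, ← Finset.add_sum_erase _ _ hjk_mem, add_sub_cancel_right,
    ← sq] at hsq
  exact Ideal.radical_isRadical _ ⟨2, hsq⟩

lemma radical_span_diagSum :
    (Ideal.span (Set.range fun d : Fin t => diagSum x y d)).radical =
      (lowerProductIdeal x y).radical := by
  refine le_antisymm (Ideal.radical_mono ?_) (Ideal.radical_le_radical_iff.mpr ?_)
  · exact Ideal.span_le.mpr (Set.range_subset_iff.mpr fun d => diagSum_mem_lowerProductIdeal x y d)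
  · exact Ideal.span_le.mpr fun _ ⟨j, k, hkj, hp⟩ =>
      hp ▸ mul_mem_radical_span_diagSum x y hkj

lemma lowerProductIdeal_le_stairIdeal (i : ℕ) : lowerProductIdeal x y ≤ stairIdeal x y i := by
  refine Ideal.span_le.mpr ?_
  rintro _ ⟨j, k, hkj, rfl⟩
  by_cases h : i ≤ (j : ℕ)
  · exact Ideal.mul_mem_right _ _ (Ideal.subset_span (Or.inr ⟨j, h, rfl⟩))
  · refine Ideal.mul_mem_left _ _ (Ideal.subset_span (Or.inl ⟨k, ?_, rfl⟩))
    simp only [Set.mem_ofPred_eq]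
    omega

lemma prod_stairIdeal_le_lowerProductIdeal :
    ∏ i ∈ Finset.Iic t, stairIdeal x y i ≤ lowerProductIdeal x y := by
  classical
  unfold stairIdeal
  rw [Ideal.prod_span, Ideal.span_le]
  intro q hq
  obtain ⟨g, hg, rfl⟩ := (Set.mem_finsetProd _ _ _).mp hq
  have h0 : g 0 ∈ x '' {j | 0 ≤ (j : ℕ)} := (hg (by simp)).resolve_left (by simp)
  have ht : g t ∉ x '' {j | t ≤ (j : ℕ)} := by
    rintro ⟨j, hj, -⟩
    simp only [Set.mem_ofPred_eq] at hj
    omega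
  obtain ⟨i, hit, ⟨j, hij, hgi⟩, hnext⟩ := Nat.exists_lt_and_not_succ_of_not
    (P := fun i => g i ∈ x '' {j | i ≤ (j : ℕ)}) h0 ht
  obtain ⟨k, hk, hgk⟩ := (hg (by simp only [Finset.mem_Iic]; omega)).resolve_right hnext
  have hdvd : g i * g (i + 1) ∣ ∏ i ∈ Finset.Iic t, g i := by
    rw [← Finset.prod_pair (by omega : i ≠ i + 1)]
    exact Finset.prod_dvd_prod_of_subset _ _ _ fun a ha => by
      simp only [Finset.mem_insert, Finset.mem_singleton, Finset.mem_Iic] at ha ⊢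
      omega
  refine Ideal.mem_of_dvd _ hdvd ?_
  rw [← hgi, ← hgk]
  exact mul_mem_lowerProductIdeal (by simp only [Set.mem_ofPred_eq] at hij hk; omega)

lemma radical_iInf_stairIdeal :
    (⨅ i ∈ Finset.Iic t, stairIdeal x y i).radical = (lowerProductIdeal x y).radical := by
  refine le_antisymm ?_ <|
    Ideal.radical_mono (le_iInf₂ fun i _ => lowerProductIdeal_le_stairIdeal x y i)
  rw [← Finset.inf_eq_iInf, ← Ideal.radical_finset_prod]
  exact Ideal.radical_mono (prod_stairIdeal_le_lowerProductIdeal x y)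

end Staircase

/-- In `R = K[x₁,…,x_t,y₁,…,y_t]` (realized as the polynomial ring on `Fin t ⊕ Fin t`,
`x_j = X (inl j)`, `y_j = X (inr j)`), there exist `t` elements `γ₁,…,γ_t` with
`√(γ₁,…,γ_t) = √(⋂_{i=0}^{t} (y₁,…,y_i,x_{i+1},…,x_t))`. -/
theorem stmt_12 (K : Type*) [Field K] (t : ℕ) :
    ∃ γ : Fin t → MvPolynomial (Fin t ⊕ Fin t) K,
      (Ideal.span (Set.range γ)).radical =
        (⨅ i ∈ Finset.Iic t,
          Ideal.span ((fun j : Fin t => X (Sum.inr j)) '' {j | (j : ℕ) < i} ∪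
            (fun j : Fin t => X (Sum.inl j)) '' {j | i ≤ (j : ℕ)})).radical :=
  ⟨_, (radical_span_diagSum _ _).trans (radical_iInf_stairIdeal _ _).symm⟩
end

section
/- Let $R$ be a commutative Noetherian ring and let $\mu_1,\mu_2,\mu_3,\nu_1,\nu_2,\nu_3,\xi_1,\xi_2,\xi_3\in R$ with $\mu_1\in(\nu_1)$ and $\mu_2\in(\xi_1)$. Then the ideal $I=(\mu_1,\mu_2,\mu_3)\cap(\nu_1,\nu_2,\nu_3)\cap(\xi_1,\xi_2,\xi_3)$ satisfies ara$\,I\le 5$, i.e., there exist $\delta_1,\dots,\delta_5\in R$ with $\sqrt{I}=\sqrt{(\delta_1,\dots,\delta_5)}$. -/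
private lemma root_mem_radical {R : Type*} [CommRing R] {J : Ideal R} {x : R} {n : ℕ}
    (h : x ^ n ∈ J.radical) : x ∈ J.radical := by
  obtain ⟨m, hm⟩ := h
  exact ⟨n * m, by rwa [pow_mul]⟩

private lemma mul_mem_of_eq {R : Type*} [CommRing R] {J : Ideal R} {g x c : R}
    (h : g ∈ J) (e : x = g * c) : x ∈ J := e ▸ J.mul_mem_right c h

/-- **Example 3** (general form). If `μ₁ ∈ (ν₁)` and `μ₂ ∈ (ξ₁)`, then the ideal
`I = (μ₁,μ₂,μ₃) ∩ (ν₁,ν₂,ν₃) ∩ (ξ₁,ξ₂,ξ₃)` satisfies `ara I ≤ 5`: there exist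
`δ₁,…,δ₅` with `√I = √(δ₁,…,δ₅)`. -/
theorem stmt_15 {R : Type*} [CommRing R] [IsNoetherianRing R]
    (μ₁ μ₂ μ₃ ν₁ ν₂ ν₃ ξ₁ ξ₂ ξ₃ : R)
    (h1 : μ₁ ∈ Ideal.span {ν₁}) (h2 : μ₂ ∈ Ideal.span {ξ₁})
    (I : Ideal R)
    (hI : I = Ideal.span {μ₁, μ₂, μ₃} ⊓ Ideal.span {ν₁, ν₂, ν₃} ⊓
      Ideal.span {ξ₁, ξ₂, ξ₃}) :
    ∃ δ : Fin 5 → R, I.radical = (Ideal.span (Set.range δ)).radical := by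
  subst hI
  obtain ⟨a, ha⟩ := Ideal.mem_span_singleton'.mp h1
  obtain ⟨b, hb⟩ := Ideal.mem_span_singleton'.mp h2
  subst ha; subst hb
  -- the five elements (Schmitt–Vogel rows)
  refine ⟨![μ₃*ν₁*ξ₁,
            b*ξ₁*ν₁ + μ₃*ν₁*ξ₂ + μ₃*ν₂*ξ₁,
            a*ν₁*ξ₁ + b*ξ₁*ν₂ + μ₃*ν₁*ξ₃ + μ₃*ν₂*ξ₂ + μ₃*ν₃*ξ₁,
            b*ξ₁*ν₃ + a*ν₁*ξ₂ + μ₃*ν₂*ξ₃ + μ₃*ν₃*ξ₂,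
            a*ν₁*ξ₃ + μ₃*ν₃*ξ₃], ?_⟩
  set M : Ideal R := Ideal.span {a*ν₁, b*ξ₁, μ₃} with hM
  set N : Ideal R := Ideal.span {ν₁, ν₂, ν₃} with hN
  set X : Ideal R := Ideal.span {ξ₁, ξ₂, ξ₃} with hX
  set J : Ideal R := Ideal.span (Set.range ![μ₃*ν₁*ξ₁,
            b*ξ₁*ν₁ + μ₃*ν₁*ξ₂ + μ₃*ν₂*ξ₁,
            a*ν₁*ξ₁ + b*ξ₁*ν₂ + μ₃*ν₁*ξ₃ + μ₃*ν₂*ξ₂ + μ₃*ν₃*ξ₁,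
            b*ξ₁*ν₃ + a*ν₁*ξ₂ + μ₃*ν₂*ξ₃ + μ₃*ν₃*ξ₂,
            a*ν₁*ξ₃ + μ₃*ν₃*ξ₃]) with hJ
  -- the five generators of J
  have hd0 : μ₃*ν₁*ξ₁ ∈ J := Ideal.subset_span ⟨0, rfl⟩
  have hd1 : b*ξ₁*ν₁ + μ₃*ν₁*ξ₂ + μ₃*ν₂*ξ₁ ∈ J := Ideal.subset_span ⟨1, rfl⟩
  have hd2 : a*ν₁*ξ₁ + b*ξ₁*ν₂ + μ₃*ν₁*ξ₃ + μ₃*ν₂*ξ₂ + μ₃*ν₃*ξ₁ ∈ J :=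
    Ideal.subset_span ⟨2, rfl⟩
  have hd3 : b*ξ₁*ν₃ + a*ν₁*ξ₂ + μ₃*ν₂*ξ₃ + μ₃*ν₃*ξ₂ ∈ J := Ideal.subset_span ⟨3, rfl⟩
  have hd4 : a*ν₁*ξ₃ + μ₃*ν₃*ξ₃ ∈ J := Ideal.subset_span ⟨4, rfl⟩
  -- Schmitt–Vogel induction: the 15 products lie in √J
  have hC11 : μ₃*ν₁*ξ₁ ∈ J.radical := Ideal.le_radical hd0
  have hA1 : b*ξ₁*ν₁ ∈ J.radical := by
    refine root_mem_radical (n := 2) ?_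
    have e : (b*ξ₁*ν₁)^2 = (b*ξ₁*ν₁) * (b*ξ₁*ν₁ + μ₃*ν₁*ξ₂ + μ₃*ν₂*ξ₁)
        - (μ₃*ν₁*ξ₁)*(b*ν₁*ξ₂) - (μ₃*ν₁*ξ₁)*(b*ν₂*ξ₁) := by ring
    rw [e]
    exact sub_mem (sub_mem (Ideal.mul_mem_left _ _ (Ideal.le_radical hd1))
      (Ideal.mul_mem_right _ _ hC11)) (Ideal.mul_mem_right _ _ hC11)
  have hC12 : μ₃*ν₁*ξ₂ ∈ J.radical := by
    refine root_mem_radical (n := 2) ?_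
    have e : (μ₃*ν₁*ξ₂)^2 = (μ₃*ν₁*ξ₂) * (b*ξ₁*ν₁ + μ₃*ν₁*ξ₂ + μ₃*ν₂*ξ₁)
        - (μ₃*ν₁*ξ₁)*(b*ν₁*ξ₂) - (μ₃*ν₁*ξ₁)*(μ₃*ν₂*ξ₂) := by ring
    rw [e]
    exact sub_mem (sub_mem (Ideal.mul_mem_left _ _ (Ideal.le_radical hd1))
      (Ideal.mul_mem_right _ _ hC11)) (Ideal.mul_mem_right _ _ hC11)
  have hC21 : μ₃*ν₂*ξ₁ ∈ J.radical := by
    refine root_mem_radical (n := 2) ?_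
    have e : (μ₃*ν₂*ξ₁)^2 = (μ₃*ν₂*ξ₁) * (b*ξ₁*ν₁ + μ₃*ν₁*ξ₂ + μ₃*ν₂*ξ₁)
        - (μ₃*ν₁*ξ₁)*(b*ν₂*ξ₁) - (μ₃*ν₁*ξ₁)*(μ₃*ν₂*ξ₂) := by ring
    rw [e]
    exact sub_mem (sub_mem (Ideal.mul_mem_left _ _ (Ideal.le_radical hd1))
      (Ideal.mul_mem_right _ _ hC11)) (Ideal.mul_mem_right _ _ hC11)
  have hB1 : a*ν₁*ξ₁ ∈ J.radical := by
    refine root_mem_radical (n := 2) ?_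
    have e : (a*ν₁*ξ₁)^2 = (a*ν₁*ξ₁) * (a*ν₁*ξ₁ + b*ξ₁*ν₂ + μ₃*ν₁*ξ₃ + μ₃*ν₂*ξ₂ + μ₃*ν₃*ξ₁)
        - (b*ξ₁*ν₁)*(a*ν₂*ξ₁) - (μ₃*ν₁*ξ₁)*(a*ν₁*ξ₃)
        - (μ₃*ν₁*ξ₁)*(a*ν₂*ξ₂) - (μ₃*ν₁*ξ₁)*(a*ν₃*ξ₁) := by ring
    rw [e]
    exact sub_mem (sub_mem (sub_mem (sub_mem
      (Ideal.mul_mem_left _ _ (Ideal.le_radical hd2))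
      (Ideal.mul_mem_right _ _ hA1)) (Ideal.mul_mem_right _ _ hC11))
      (Ideal.mul_mem_right _ _ hC11)) (Ideal.mul_mem_right _ _ hC11)
  have hA2 : b*ξ₁*ν₂ ∈ J.radical := by
    refine root_mem_radical (n := 2) ?_
    have e : (b*ξ₁*ν₂)^2 = (b*ξ₁*ν₂) * (a*ν₁*ξ₁ + b*ξ₁*ν₂ + μ₃*ν₁*ξ₃ + μ₃*ν₂*ξ₂ + μ₃*ν₃*ξ₁)
        - (b*ξ₁*ν₁)*(a*ν₂*ξ₁) - (μ₃*ν₁*ξ₁)*(b*ν₂*ξ₃)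
        - (μ₃*ν₂*ξ₁)*(b*ν₂*ξ₂) - (μ₃*ν₂*ξ₁)*(b*ν₃*ξ₁) := by ring
    rw [e]
    exact sub_mem (sub_mem (sub_mem (sub_mem
      (Ideal.mul_mem_left _ _ (Ideal.le_radical hd2))
      (Ideal.mul_mem_right _ _ hA1)) (Ideal.mul_mem_right _ _ hC11))
      (Ideal.mul_mem_right _ _ hC21)) (Ideal.mul_mem_right _ _ hC21)
  have hC13 : μ₃*ν₁*ξ₃ ∈ J.radical := by
    refine root_mem_radical (n := 2) ?_
    have e : (μ₃*ν₁*ξ₃)^2 = (μ₃*ν₁*ξ₃) * (a*ν₁*ξ₁ + b*ξ₁*ν₂ + μ₃*ν₁*ξ₃ + μ₃*ν₂*ξ₂ + μ₃*ν₃*ξ₁)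
        - (μ₃*ν₁*ξ₁)*(a*ν₁*ξ₃) - (μ₃*ν₁*ξ₁)*(b*ν₂*ξ₃)
        - (μ₃*ν₁*ξ₂)*(μ₃*ν₂*ξ₃) - (μ₃*ν₁*ξ₁)*(μ₃*ν₃*ξ₃) := by ring
    rw [e]
    exact sub_mem (sub_mem (sub_mem (sub_mem
      (Ideal.mul_mem_left _ _ (Ideal.le_radical hd2))
      (Ideal.mul_mem_right _ _ hC11)) (Ideal.mul_mem_right _ _ hC11))
      (Ideal.mul_mem_right _ _ hC12)) (Ideal.mul_mem_right _ _ hC11)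
  have hC22 : μ₃*ν₂*ξ₂ ∈ J.radical := by
    refine root_mem_radical (n := 2) ?_
    have e : (μ₃*ν₂*ξ₂)^2 = (μ₃*ν₂*ξ₂) * (a*ν₁*ξ₁ + b*ξ₁*ν₂ + μ₃*ν₁*ξ₃ + μ₃*ν₂*ξ₂ + μ₃*ν₃*ξ₁)
        - (μ₃*ν₁*ξ₁)*(a*ν₂*ξ₂) - (μ₃*ν₂*ξ₁)*(b*ν₂*ξ₂)
        - (μ₃*ν₁*ξ₂)*(μ₃*ν₂*ξ₃) - (μ₃*ν₂*ξ₁)*(μ₃*ν₃*ξ₂) := by ring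
    rw [e]
    exact sub_mem (sub_mem (sub_mem (sub_mem
      (Ideal.mul_mem_left _ _ (Ideal.le_radical hd2))
      (Ideal.mul_mem_right _ _ hC11)) (Ideal.mul_mem_right _ _ hC21))
      (Ideal.mul_mem_right _ _ hC12)) (Ideal.mul_mem_right _ _ hC21)
  have hC31 : μ₃*ν₃*ξ₁ ∈ J.radical := by
    refine root_mem_radical (n := 2) ?_
    have e : (μ₃*ν₃*ξ₁)^2 = (μ₃*ν₃*ξ₁) * (a*ν₁*ξ₁ + b*ξ₁*ν₂ + μ₃*ν₁*ξ₃ + μ₃*ν₂*ξ₂ + μ₃*ν₃*ξ₁)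
        - (μ₃*ν₁*ξ₁)*(a*ν₃*ξ₁) - (μ₃*ν₂*ξ₁)*(b*ν₃*ξ₁)
        - (μ₃*ν₁*ξ₁)*(μ₃*ν₃*ξ₃) - (μ₃*ν₂*ξ₁)*(μ₃*ν₃*ξ₂) := by ring
    rw [e]
    exact sub_mem (sub_mem (sub_mem (sub_mem
      (Ideal.mul_mem_left _ _ (Ideal.le_radical hd2))
      (Ideal.mul_mem_right _ _ hC11)) (Ideal.mul_mem_right _ _ hC21))
      (Ideal.mul_mem_right _ _ hC11)) (Ideal.mul_mem_right _ _ hC21)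
  have hA3 : b*ξ₁*ν₃ ∈ J.radical := by
    refine root_mem_radical (n := 2) ?_
    have e : (b*ξ₁*ν₃)^2 = (b*ξ₁*ν₃) * (b*ξ₁*ν₃ + a*ν₁*ξ₂ + μ₃*ν₂*ξ₃ + μ₃*ν₃*ξ₂)
        - (b*ξ₁*ν₁)*(a*ν₃*ξ₂) - (μ₃*ν₂*ξ₁)*(b*ν₃*ξ₃) - (μ₃*ν₃*ξ₁)*(b*ν₃*ξ₂) := by ring
    rw [e]
    exact sub_mem (sub_mem (sub_mem
      (Ideal.mul_mem_left _ _ (Ideal.le_radical hd3))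
      (Ideal.mul_mem_right _ _ hA1)) (Ideal.mul_mem_right _ _ hC21))
      (Ideal.mul_mem_right _ _ hC31)
  have hB2 : a*ν₁*ξ₂ ∈ J.radical := by
    refine root_mem_radical (n := 2) ?_
    have e : (a*ν₁*ξ₂)^2 = (a*ν₁*ξ₂) * (b*ξ₁*ν₃ + a*ν₁*ξ₂ + μ₃*ν₂*ξ₃ + μ₃*ν₃*ξ₂)
        - (b*ξ₁*ν₁)*(a*ν₃*ξ₂) - (μ₃*ν₁*ξ₂)*(a*ν₂*ξ₃) - (μ₃*ν₁*ξ₂)*(a*ν₃*ξ₂) := by ring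
    rw [e]
    exact sub_mem (sub_mem (sub_mem
      (Ideal.mul_mem_left _ _ (Ideal.le_radical hd3))
      (Ideal.mul_mem_right _ _ hA1)) (Ideal.mul_mem_right _ _ hC12))
      (Ideal.mul_mem_right _ _ hC12)
  have hC23 : μ₃*ν₂*ξ₃ ∈ J.radical := by
    refine root_mem_radical (n := 2) ?_
    have e : (μ₃*ν₂*ξ₃)^2 = (μ₃*ν₂*ξ₃) * (b*ξ₁*ν₃ + a*ν₁*ξ₂ + μ₃*ν₂*ξ₃ + μ₃*ν₃*ξ₂)
        - (μ₃*ν₂*ξ₁)*(b*ν₃*ξ₃) - (μ₃*ν₁*ξ₂)*(a*ν₂*ξ₃) - (μ₃*ν₂*ξ₂)*(μ₃*ν₃*ξ₃) := by ring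
    rw [e]
    exact sub_mem (sub_mem (sub_mem
      (Ideal.mul_mem_left _ _ (Ideal.le_radical hd3))
      (Ideal.mul_mem_right _ _ hC21)) (Ideal.mul_mem_right _ _ hC12))
      (Ideal.mul_mem_right _ _ hC22)
  have hC32 : μ₃*ν₃*ξ₂ ∈ J.radical := by
    refine root_mem_radical (n := 2) ?_
    have e : (μ₃*ν₃*ξ₂)^2 = (μ₃*ν₃*ξ₂) * (b*ξ₁*ν₃ + a*ν₁*ξ₂ + μ₃*ν₂*ξ₃ + μ₃*ν₃*ξ₂)
        - (μ₃*ν₃*ξ₁)*(b*ν₃*ξ₂) - (μ₃*ν₁*ξ₂)*(a*ν₃*ξ₂) - (μ₃*ν₂*ξ₂)*(μ₃*ν₃*ξ₃) := by ring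
    rw [e]
    exact sub_mem (sub_mem (sub_mem
      (Ideal.mul_mem_left _ _ (Ideal.le_radical hd3))
      (Ideal.mul_mem_right _ _ hC31)) (Ideal.mul_mem_right _ _ hC12))
      (Ideal.mul_mem_right _ _ hC22)
  have hB3 : a*ν₁*ξ₃ ∈ J.radical := by
    refine root_mem_radical (n := 2) ?_
    have e : (a*ν₁*ξ₃)^2 = (a*ν₁*ξ₃) * (a*ν₁*ξ₃ + μ₃*ν₃*ξ₃)
        - (μ₃*ν₁*ξ₃)*(a*ν₃*ξ₃) := by ring
    rw [e]
    exact sub_mem (Ideal.mul_mem_left _ _ (Ideal.le_radical hd4))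
      (Ideal.mul_mem_right _ _ hC13)
  have hC33 : μ₃*ν₃*ξ₃ ∈ J.radical := by
    refine root_mem_radical (n := 2) ?_
    have e : (μ₃*ν₃*ξ₃)^2 = (μ₃*ν₃*ξ₃) * (a*ν₁*ξ₃ + μ₃*ν₃*ξ₃)
        - (μ₃*ν₁*ξ₃)*(a*ν₃*ξ₃) := by ring
    rw [e]
    exact sub_mem (Ideal.mul_mem_left _ _ (Ideal.le_radical hd4))
      (Ideal.mul_mem_right _ _ hC13)
  -- J ≤ M ⊓ N ⊓ X
  have hgM1 : a*ν₁ ∈ M := Ideal.subset_span (by simp)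
  have hgM2 : b*ξ₁ ∈ M := Ideal.subset_span (by simp)
  have hgM3 : μ₃ ∈ M := Ideal.subset_span (by simp)
  have hgN1 : ν₁ ∈ N := Ideal.subset_span (by simp)
  have hgN2 : ν₂ ∈ N := Ideal.subset_span (by simp)
  have hgN3 : ν₃ ∈ N := Ideal.subset_span (by simp)
  have hgX1 : ξ₁ ∈ X := Ideal.subset_span (by simp)
  have hgX2 : ξ₂ ∈ X := Ideal.subset_span (by simp)
  have hgX3 : ξ₃ ∈ X := Ideal.subset_span (by simp)
  -- each of the 15 basic products lies in M ⊓ N ⊓ X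
  have hbase : ∀ x : R,
      (∃ g c, g ∈ M ∧ x = g * c) → (∃ g c, g ∈ N ∧ x = g * c) →
      (∃ g c, g ∈ X ∧ x = g * c) → x ∈ M ⊓ N ⊓ X := by
    rintro x ⟨g1, c1, hg1, e1⟩ ⟨g2, c2, hg2, e2⟩ ⟨g3, c3, hg3, e3⟩
    exact ⟨⟨mul_mem_of_eq hg1 e1, mul_mem_of_eq hg2 e2⟩, mul_mem_of_eq hg3 e3⟩
  have hJle : J ≤ M ⊓ N ⊓ X := by
    rw [hJ, Ideal.span_le]
    intro x hx
    simp only [Matrix.range_cons, Matrix.range_empty, Set.union_empty, Set.mem_union,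
      Set.mem_singleton_iff] at hx
    rcases hx with rfl | rfl | rfl | rfl | rfl
    · exact hbase _ ⟨μ₃, ν₁*ξ₁, hgM3, by ring⟩ ⟨ν₁, μ₃*ξ₁, hgN1, by ring⟩
        ⟨ξ₁, μ₃*ν₁, hgX1, by ring⟩
    · exact add_mem (add_mem
        (hbase _ ⟨b*ξ₁, ν₁, hgM2, by ring⟩ ⟨ν₁, b*ξ₁, hgN1, by ring⟩ ⟨ξ₁, b*ν₁, hgX1, by ring⟩)
        (hbase _ ⟨μ₃, ν₁*ξ₂, hgM3, by ring⟩ ⟨ν₁, μ₃*ξ₂, hgN1, by ring⟩ ⟨ξ₂, μ₃*ν₁, hgX2, by ring⟩))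
        (hbase _ ⟨μ₃, ν₂*ξ₁, hgM3, by ring⟩ ⟨ν₂, μ₃*ξ₁, hgN2, by ring⟩ ⟨ξ₁, μ₃*ν₂, hgX1, by ring⟩)
    · exact add_mem (add_mem (add_mem (add_mem
        (hbase _ ⟨a*ν₁, ξ₁, hgM1, by ring⟩ ⟨ν₁, a*ξ₁, hgN1, by ring⟩ ⟨ξ₁, a*ν₁, hgX1, by ring⟩)
        (hbase _ ⟨b*ξ₁, ν₂, hgM2, by ring⟩ ⟨ν₂, b*ξ₁, hgN2, by ring⟩ ⟨ξ₁, b*ν₂, hgX1, by ring⟩))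
        (hbase _ ⟨μ₃, ν₁*ξ₃, hgM3, by ring⟩ ⟨ν₁, μ₃*ξ₃, hgN1, by ring⟩ ⟨ξ₃, μ₃*ν₁, hgX3, by ring⟩))
        (hbase _ ⟨μ₃, ν₂*ξ₂, hgM3, by ring⟩ ⟨ν₂, μ₃*ξ₂, hgN2, by ring⟩ ⟨ξ₂, μ₃*ν₂, hgX2, by ring⟩))
        (hbase _ ⟨μ₃, ν₃*ξ₁, hgM3, by ring⟩ ⟨ν₃, μ₃*ξ₁, hgN3, by ring⟩ ⟨ξ₁, μ₃*ν₃, hgX1, by ring⟩)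
    · exact add_mem (add_mem (add_mem
        (hbase _ ⟨b*ξ₁, ν₃, hgM2, by ring⟩ ⟨ν₃, b*ξ₁, hgN3, by ring⟩ ⟨ξ₁, b*ν₃, hgX1, by ring⟩)
        (hbase _ ⟨a*ν₁, ξ₂, hgM1, by ring⟩ ⟨ν₁, a*ξ₂, hgN1, by ring⟩ ⟨ξ₂, a*ν₁, hgX2, by ring⟩))
        (hbase _ ⟨μ₃, ν₂*ξ₃, hgM3, by ring⟩ ⟨ν₂, μ₃*ξ₃, hgN2, by ring⟩ ⟨ξ₃, μ₃*ν₂, hgX3, by ring⟩))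
        (hbase _ ⟨μ₃, ν₃*ξ₂, hgM3, by ring⟩ ⟨ν₃, μ₃*ξ₂, hgN3, by ring⟩ ⟨ξ₂, μ₃*ν₃, hgX2, by ring⟩)
    · exact add_mem
        (hbase _ ⟨a*ν₁, ξ₃, hgM1, by ring⟩ ⟨ν₁, a*ξ₃, hgN1, by ring⟩ ⟨ξ₃, a*ν₁, hgX3, by ring⟩)
        (hbase _ ⟨μ₃, ν₃*ξ₃, hgM3, by ring⟩ ⟨ν₃, μ₃*ξ₃, hgN3, by ring⟩ ⟨ξ₃, μ₃*ν₃, hgX3, by ring⟩)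
  -- M ⊓ N ⊓ X ≤ √J
  have hIle : M ⊓ N ⊓ X ≤ J.radical := by
    intro x hx
    rw [Submodule.mem_inf, Submodule.mem_inf] at hx
    obtain ⟨⟨hxM, hxN⟩, hxX⟩ := hx
    -- expand x along the generators of M, N, X
    rw [hM, Ideal.mem_span_insert] at hxM
    obtain ⟨c1, z1, hz1, hxMeq⟩ := hxM
    rw [Ideal.mem_span_insert] at hz1
    obtain ⟨c2, z2, hz2, hz1eq⟩ := hz1
    rw [Ideal.mem_span_singleton'] at hz2
    obtain ⟨c3, hz2eq⟩ := hz2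
    subst hz2eq; subst hz1eq
    rw [hN, Ideal.mem_span_insert] at hxN
    obtain ⟨d1, w1, hw1, hxNeq⟩ := hxN
    rw [Ideal.mem_span_insert] at hw1
    obtain ⟨d2, w2, hw2, hw1eq⟩ := hw1
    rw [Ideal.mem_span_singleton'] at hw2
    obtain ⟨d3, hw2eq⟩ := hw2
    subst hw2eq; subst hw1eq
    rw [hX, Ideal.mem_span_insert] at hxX
    obtain ⟨e1, y1, hy1, hxXeq⟩ := hxX
    rw [Ideal.mem_span_insert] at hy1
    obtain ⟨e2, y2, hy2, hy1eq⟩ := hy1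
    rw [Ideal.mem_span_singleton'] at hy2
    obtain ⟨e3, hy2eq⟩ := hy2
    subst hy2eq; subst hy1eq
    -- auxiliary memberships
    have hν₁x : a*ν₁*x ∈ J.radical := by
      have e : a*ν₁*x = (a*ν₁*ξ₁)*e1 + (a*ν₁*ξ₂)*e2 + (a*ν₁*ξ₃)*e3 := by
        rw [hxXeq]; ring
      rw [e]
      exact add_mem (add_mem (Ideal.mul_mem_right _ _ hB1) (Ideal.mul_mem_right _ _ hB2))
        (Ideal.mul_mem_right _ _ hB3)
    have hξ₁x : b*ξ₁*x ∈ J.radical := by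
      have e : b*ξ₁*x = (b*ξ₁*ν₁)*d1 + (b*ξ₁*ν₂)*d2 + (b*ξ₁*ν₃)*d3 := by
        rw [hxNeq]; ring
      rw [e]
      exact add_mem (add_mem (Ideal.mul_mem_right _ _ hA1) (Ideal.mul_mem_right _ _ hA2))
        (Ideal.mul_mem_right _ _ hA3)
    have hμν : ∀ (hj : R), μ₃*hj*ξ₁ ∈ J.radical → μ₃*hj*ξ₂ ∈ J.radical →
        μ₃*hj*ξ₃ ∈ J.radical → μ₃*hj*x ∈ J.radical := by
      intro hj m1 m2 m3'
      have e : μ₃*hj*x = (μ₃*hj*ξ₁)*e1 + (μ₃*hj*ξ₂)*e2 + (μ₃*hj*ξ₃)*e3 := by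
        rw [hxXeq]; ring
      rw [e]
      exact add_mem (add_mem (Ideal.mul_mem_right _ _ m1) (Ideal.mul_mem_right _ _ m2))
        (Ideal.mul_mem_right _ _ m3')
    have hμ1x : μ₃*ν₁*x ∈ J.radical := hμν ν₁ hC11 hC12 hC13
    have hμ2x : μ₃*ν₂*x ∈ J.radical := hμν ν₂ hC21 hC22 hC23
    have hμ3x : μ₃*ν₃*x ∈ J.radical := hμν ν₃ hC31 hC32 hC33
    have hμxx : μ₃*x*x ∈ J.radical := by
      have e : μ₃*x*x = (μ₃*ν₁*x)*d1 + (μ₃*ν₂*x)*d2 + (μ₃*ν₃*x)*d3 := by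
        rw [hxNeq]; ring
      rw [e]
      exact add_mem (add_mem (Ideal.mul_mem_right _ _ hμ1x) (Ideal.mul_mem_right _ _ hμ2x))
        (Ideal.mul_mem_right _ _ hμ3x)
    refine root_mem_radical (n := 3) ?_
    have e : x^3 = (a*ν₁*x)*(c1*x) + (b*ξ₁*x)*(c2*x) + (μ₃*x*x)*c3 := by
      rw [hxMeq]; ring
    rw [e]
    exact add_mem (add_mem (Ideal.mul_mem_right _ _ hν₁x) (Ideal.mul_mem_right _ _ hξ₁x))
      (Ideal.mul_mem_right _ _ hμxx)
  refine le_antisymm ?_ ?_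
  · calc (M ⊓ N ⊓ X).radical ≤ (J.radical).radical := Ideal.radical_mono hIle
      _ = J.radical := Ideal.radical_idem J
  · exact Ideal.radical_mono hJle
end
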